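/- arXiv:1709.03425 — 6 statements merged into one kernel-verified Lean document; each statement's English description precedes it below -/
import Mathlib

section
/- Let n ≥ 2 and let Ω ⊂ ℂⁿ be a domain with smooth connected boundary M. Let C be an outer collar of M and let C' ⊆ C also be an outer collar of M. If every function f holomorphic on C' extends holomorphically to the open set Ω ∪ M ∪ C' (i.e. there is F holomorphic on Ω ∪ M ∪ C' with F = f on C'), then every function g holomorphic on C extends holomorphically to the open set Ω ∪ M ∪ C (i.e. there is G holomorphic on Ω ∪ M ∪ C with G = g on C). -/
open Set Metric

/-- `Ω` is a domain (nonempty connected open set) in `ℂⁿ` with smooth connected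
boundary `M`: `M` is the frontier of `Ω`, `M` is nonempty and connected, and near
every point of `M` the pair `(Ω, M)` is given by a smooth local defining function
with nonvanishing derivative. -/
def HasSmoothConnectedBoundary (n : ℕ) (Ω M : Set (EuclideanSpace ℂ (Fin n))) : Prop :=
  IsOpen Ω ∧ IsConnected Ω ∧ M = frontier Ω ∧ IsConnected M ∧
    ∀ z ∈ M, ∃ (U : Set (EuclideanSpace ℂ (Fin n))) (ρ : EuclideanSpace ℂ (Fin n) → ℝ),
      IsOpen U ∧ z ∈ U ∧ ContDiff ℝ (⊤ : ℕ∞) ρ ∧ (∀ x ∈ U, fderiv ℝ ρ x ≠ 0) ∧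
      Ω ∩ U = {x | ρ x < 0} ∩ U ∧ M ∩ U = {x | ρ x = 0} ∩ U

/-- `C` is an outer collar of `M` (the boundary of the domain `Ω`): a nonempty
connected open subset of `ℂⁿ \ closure Ω` such that `C ∪ M` is a relative
neighborhood of `M` in `ℂⁿ \ Ω`. -/
def IsOuterCollar (n : ℕ) (Ω M C : Set (EuclideanSpace ℂ (Fin n))) : Prop :=
  IsOpen C ∧ IsConnected C ∧ C ⊆ (closure Ω)ᶜ ∧
    ∀ z ∈ M, ∃ ε > 0, Metric.ball z ε ∩ Ωᶜ ⊆ C ∪ M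

/-- The subcollar lemma of Section 4 (function-extension form): if the extension
property holds for a subcollar `C' ⊆ C`, then it holds for `C`. -/
theorem subcollar_lemma (n : ℕ) (hn : 2 ≤ n)
    (Ω M : Set (EuclideanSpace ℂ (Fin n)))
    (hΩM : HasSmoothConnectedBoundary n Ω M)
    (C C' : Set (EuclideanSpace ℂ (Fin n)))
    (hC : IsOuterCollar n Ω M C) (hC' : IsOuterCollar n Ω M C') (hsub : C' ⊆ C)
    (hext : ∀ f : EuclideanSpace ℂ (Fin n) → ℂ, DifferentiableOn ℂ f C' →
      ∃ F : EuclideanSpace ℂ (Fin n) → ℂ,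
        DifferentiableOn ℂ F (Ω ∪ M ∪ C') ∧ EqOn F f C') :
    ∀ g : EuclideanSpace ℂ (Fin n) → ℂ, DifferentiableOn ℂ g C →
      ∃ G : EuclideanSpace ℂ (Fin n) → ℂ,
        DifferentiableOn ℂ G (Ω ∪ M ∪ C) ∧ EqOn G g C := by
  obtain ⟨hΩopen, hΩconn, hM, hMconn, hbd⟩ := hΩM
  obtain ⟨hCopen, hCconn, hCdisj, hCnbhd⟩ := hC
  obtain ⟨hC'open, hC'conn, hC'disj, hC'nbhd⟩ := hC'
  intro g hg
  obtain ⟨F, hF, hFg⟩ := hext g (hg.mono hsub)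
  classical
  refine ⟨fun x => if x ∈ C then g x else F x, ?_, fun x hx => if_pos hx⟩
  have hMΩ : M ⊆ closure Ω := hM ▸ frontier_subset_closure
  have hV'open : IsOpen (Ω ∪ M ∪ C') := by
    rw [isOpen_iff_mem_nhds]
    rintro x ((hx | hx) | hx)
    · exact Filter.mem_of_superset (hΩopen.mem_nhds hx)
        (fun y hy => Or.inl (Or.inl hy))
    · obtain ⟨ε, hε, hball⟩ := hC'nbhd x hx
      refine Filter.mem_of_superset (Metric.ball_mem_nhds x hε) ?_
      intro y hy
      by_cases hyΩ : y ∈ Ω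
      · exact Or.inl (Or.inl hyΩ)
      · rcases hball ⟨hy, hyΩ⟩ with h | h
        · exact Or.inr h
        · exact Or.inl (Or.inr h)
    · exact Filter.mem_of_superset (hC'open.mem_nhds hx) (fun y hy => Or.inr hy)
  have hGF : ∀ x ∈ Ω ∪ M ∪ C', (if x ∈ C then g x else F x) = F x := by
    intro x hx
    by_cases hxC : x ∈ C
    · have hxC' : x ∈ C' := by
        rcases hx with (hx | hx) | hx
        · exact absurd (subset_closure hx) (hCdisj hxC)
        · exact absurd (hMΩ hx) (hCdisj hxC)
        · exact hx
      simp [hxC, hFg hxC']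
    · simp [hxC]
  intro x hx
  rcases hx with hx | hxC
  · have hxV' : x ∈ Ω ∪ M ∪ C' := Or.inl hx
    have hd : DifferentiableAt ℂ F x :=
      (hF x hxV').differentiableAt (hV'open.mem_nhds hxV')
    have hd2 : DifferentiableAt ℂ (fun x => if x ∈ C then g x else F x) x :=
      hd.congr_of_eventuallyEq
        (Filter.eventuallyEq_of_mem (hV'open.mem_nhds hxV') hGF)
    exact hd2.differentiableWithinAt
  · have hd : DifferentiableAt ℂ g x :=
      (hg x hxC).differentiableAt (hCopen.mem_nhds hxC)
    have hd2 : DifferentiableAt ℂ (fun x => if x ∈ C then g x else F x) x :=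
      hd.congr_of_eventuallyEq
        (Filter.eventuallyEq_of_mem (hCopen.mem_nhds hxC) (fun y hy => if_pos hy))
    exact hd2.differentiableWithinAt
end

section
/- Let n ≥ 2 and r > 0. Every function f holomorphic on the complement {z ∈ ℂⁿ : ‖z‖ > r} of the closed Euclidean ball of radius r extends to an entire function: there exists F holomorphic on all of ℂⁿ such that F(z) = f(z) for all z with ‖z‖ > r. -/
open Set Metric

/-!
Write `z = (ζ, z')` with `ζ = z 0`. For `R > max r ‖ζ‖` the circle `|w| = R` of the slice
`w ↦ (w, z')` stays in `‖·‖ > r`, so `F z = (2πi)⁻¹ ∮_{|w| = R} f (w, z') / (w - ζ) dw` makes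
sense; it does not depend on `R` (Cauchy's theorem on annuli), and it is holomorphic in `z`
(differentiation under the integral sign, the derivative of `f` being bounded on compact sets by
Cauchy estimates). If `‖z'‖ > r` the whole slice is holomorphic and Cauchy's integral formula
gives `F z = f z`. Every other `z` with `‖z‖ > r` lies on a complex line that meets `‖·‖ > r` in
the complement of a disc, a connected set, and enters the region `‖z'‖ > r` near infinity: the
line `ℂ z` if `z' ≠ 0`, the line through `z` along the second coordinate if `z' = 0`. The
one-variable identity theorem on that line gives `F z = f z`.
-/

open Complex Filter Topology MeasureTheory Bornology
open scoped Real

section CauchyEstimate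

variable {E F : Type*} [NormedAddCommGroup E] [NormedSpace ℂ E]
  [NormedAddCommGroup F] [NormedSpace ℂ F]

theorem norm_fderiv_le_of_forall_mem_closedBall_norm_le {f : E → F} {y : E} {δ M : ℝ}
    (hδ : 0 < δ) (hf : DifferentiableOn ℂ f (closedBall y δ))
    (hM : ∀ x ∈ closedBall y δ, ‖f x‖ ≤ M) : ‖fderiv ℂ f y‖ ≤ M / δ := by
  have hM₀ : 0 ≤ M := (norm_nonneg _).trans (hM y (mem_closedBall_self hδ.le))
  refine ContinuousLinearMap.opNorm_le_bound _ (by positivity) fun v => ?_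
  rcases eq_or_ne v 0 with rfl | hv
  · simp
  have hv₀ : 0 < ‖v‖ := norm_pos_iff.2 hv
  set line : ℂ → E := fun t => y + t • v
  have hline : ∀ t ∈ closedBall (0 : ℂ) (δ / ‖v‖), line t ∈ closedBall y δ := fun t ht => by
    rw [mem_closedBall_zero_iff, le_div_iff₀ hv₀] at ht
    simpa [line, norm_smul] using ht
  have hderiv : HasDerivAt (f ∘ line) (fderiv ℂ f y v) 0 := by
    have hline' : HasDerivAt line v 0 :=
      (one_smul ℂ v) ▸ ((hasDerivAt_id (0 : ℂ)).smul_const v).const_add y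
    exact (hf.differentiableAt (closedBall_mem_nhds y hδ)).hasFDerivAt.comp_hasDerivAt_of_eq 0
      hline' (by simp [line])
  have hdiff : DiffContOnCl ℂ (f ∘ line) (ball 0 (δ / ‖v‖)) := by
    refine DifferentiableOn.diffContOnCl ?_
    rw [closure_ball _ (div_pos hδ hv₀).ne']
    exact hf.comp (by fun_prop) hline
  have hcauchy := Complex.norm_deriv_le_of_forall_mem_sphere_norm_le (div_pos hδ hv₀) hdiff
    fun t ht => hM _ (hline t (sphere_subset_closedBall ht))
  rw [hderiv.deriv] at hcauchy
  calc ‖fderiv ℂ f y v‖ ≤ M / (δ / ‖v‖) := hcauchy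
    _ = M / δ * ‖v‖ := by field_simp

theorem IsCompact.exists_bound_norm_fderiv [ProperSpace E] {f : E → F} {U K : Set E}
    (hK : IsCompact K) (hU : IsOpen U) (hf : DifferentiableOn ℂ f U) (hKU : K ⊆ U) :
    ∃ C, ∀ y ∈ K, ‖fderiv ℂ f y‖ ≤ C := by
  obtain ⟨δ, hδ, hδU⟩ := hK.exists_cthickening_subset_open hU hKU
  obtain ⟨M, hM⟩ := (hK.cthickening (r := δ)).exists_bound_of_continuousOn
    (hf.continuousOn.mono hδU)
  refine ⟨M / δ, fun y hy => norm_fderiv_le_of_forall_mem_closedBall_norm_le hδ ?_ ?_⟩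
  · exact hf.mono ((closedBall_subset_cthickening hy δ).trans hδU)
  · exact fun x hx => hM x (closedBall_subset_cthickening hy δ hx)

end CauchyEstimate

theorem differentiableAt_circleIntegral_of_differentiableOn {H E : Type*}
    [NormedAddCommGroup H] [NormedSpace ℂ H] [FiniteDimensional ℂ H]
    [NormedAddCommGroup E] [NormedSpace ℂ E] [FiniteDimensional ℂ E]
    {Φ : H × ℂ → E} {U : Set (H × ℂ)} (hU : IsOpen U) (hΦ : DifferentiableOn ℂ Φ U)
    {c : ℂ} {R : ℝ} {z₀ : H} (hz₀ : ∀ w ∈ sphere c |R|, (z₀, w) ∈ U) :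
    DifferentiableAt ℂ (fun z => ∮ w in C(c, R), Φ (z, w)) z₀ := by
  borelize H
  obtain ⟨V, W, hV, -, hz₀V, hW, hVW⟩ := generalized_tube_lemma isCompact_singleton
    (isCompact_sphere c |R|) hU (by simpa [singleton_prod, subset_def] using hz₀)
  obtain ⟨δ, hδ, hδV⟩ := nhds_basis_closedBall.mem_iff.1 (hV.mem_nhds (hz₀V rfl))
  have htube : closedBall z₀ δ ×ˢ sphere c |R| ⊆ U := (prod_mono hδV hW).trans hVW
  obtain ⟨C, hC⟩ := ((isCompact_closedBall z₀ δ).prod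
    (isCompact_sphere c |R|)).exists_bound_norm_fderiv hU hΦ htube
  have hmem : ∀ z ∈ closedBall z₀ δ, ∀ θ, (z, circleMap c R θ) ∈ U := fun z hz θ =>
    htube ⟨hz, circleMap_mem_sphere' c R θ⟩
  have hpartial : ∀ z ∈ closedBall z₀ δ, ∀ θ, HasFDerivAt (fun z => Φ (z, circleMap c R θ))
      ((fderiv ℂ Φ (z, circleMap c R θ)).comp (ContinuousLinearMap.inl ℂ H ℂ)) z :=
    fun z hz θ => (hΦ.differentiableAt (hU.mem_nhds (hmem z hz θ))).hasFDerivAt.comp z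
      (hasFDerivAt_prodMk_left z _)
  have hcont : ∀ z ∈ closedBall z₀ δ,
      Continuous fun θ => deriv (circleMap c R) θ • Φ (z, circleMap c R θ) := by
    intro z hz
    simp only [deriv_circleMap]
    exact ((continuous_circleMap 0 R).mul continuous_const).smul
      (hΦ.continuousOn.comp_continuous (continuous_const.prodMk (continuous_circleMap c R))
        (hmem z hz))
  refine (intervalIntegral.hasFDerivAt_integral_of_dominated_of_fderiv_le (ball_mem_nhds z₀ hδ)
    (F' := fun z θ => deriv (circleMap c R) θ •
      (fderiv ℂ Φ (z, circleMap c R θ)).comp (ContinuousLinearMap.inl ℂ H ℂ))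
    (bound := fun _ => |R| * C) ?_ ?_ ?_ ?_ intervalIntegrable_const ?_).differentiableAt
  · filter_upwards [ball_mem_nhds z₀ hδ] with z hz using
      (hcont z (ball_subset_closedBall hz)).aestronglyMeasurable
  · exact (hcont z₀ (mem_closedBall_self hδ.le)).intervalIntegrable _ _
  · have hm : Measurable fun θ => fderiv ℂ Φ (z₀, circleMap c R θ) :=
      (measurable_fderiv ℂ Φ).comp (measurable_const.prodMk (continuous_circleMap c R).measurable)
    simp only [deriv_circleMap]
    exact (((continuous_circleMap 0 R).mul continuous_const).measurable.smul
      (((ContinuousLinearMap.compL ℂ H (H × ℂ) E).flip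
        (ContinuousLinearMap.inl ℂ H ℂ)).continuous.measurable.comp hm)).aestronglyMeasurable
  · refine ae_of_all _ fun θ _ z hz => ?_
    rw [norm_smul, deriv_circleMap, norm_mul, norm_circleMap_zero, norm_I, mul_one]
    refine mul_le_mul_of_nonneg_left ((ContinuousLinearMap.opNorm_comp_le _ _).trans ?_)
      (abs_nonneg R)
    exact (mul_le_of_le_one_right (norm_nonneg _) (ContinuousLinearMap.norm_inl_le_one ℂ H ℂ)).trans
      (hC _ ⟨ball_subset_closedBall hz, circleMap_mem_sphere' c R θ⟩)
  · exact ae_of_all _ fun θ _ z hz => (hpartial z (ball_subset_closedBall hz) θ).const_smul _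

theorem isPreconnected_setOf_lt_norm {E : Type*} [NormedAddCommGroup E] [NormedSpace ℝ E]
    (hE : 1 < Module.rank ℝ E) (c : ℝ) : IsPreconnected {z : E | c < ‖z‖} := by
  rcases lt_or_ge c 0 with hc | hc
  · have huniv : {z : E | c < ‖z‖} = univ := eq_univ_of_forall fun z => hc.trans_le (norm_nonneg z)
    exact huniv ▸ isPreconnected_univ
  have : {z : E | c < ‖z‖} = (fun p : ℝ × E => p.1 • p.2) '' (Ioi c ×ˢ sphere 0 1) := by
    ext z
    constructor
    · intro hz
      have hz₀ : ‖z‖ ≠ 0 := (hc.trans_lt hz).ne'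
      exact ⟨(‖z‖, ‖z‖⁻¹ • z), ⟨hz, by simp [norm_smul, hz₀]⟩, by simp [smul_smul, hz₀]⟩
    · rintro ⟨⟨t, u⟩, ⟨ht, hu⟩, rfl⟩
      simp_all [norm_smul, abs_of_pos (hc.trans_lt ht)]
  rw [this]
  exact (isPreconnected_Ioi.prod (isPreconnected_sphere hE 0 1)).image _
    (continuous_fst.smul continuous_snd).continuousOn

theorem setOf_lt_norm_mem_cobounded {E : Type*} [SeminormedAddCommGroup E] (c : ℝ) :
    {z : E | c < ‖z‖} ∈ cobounded E :=
  tendsto_norm_cobounded_atTop.eventually_gt_atTop c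

theorem eqOn_of_isPreconnected_of_eventuallyEq_cobounded {E : Type*} [NormedAddCommGroup E]
    [NormedSpace ℂ E] [CompleteSpace E] {f g : ℂ → E} {Ω : Set ℂ}
    (hΩ : IsOpen Ω) (hΩc : IsPreconnected Ω) (hΩb : Ω ∈ cobounded ℂ)
    (hf : DifferentiableOn ℂ f Ω) (hg : DifferentiableOn ℂ g Ω) (hfg : f =ᶠ[cobounded ℂ] g) :
    EqOn f g Ω := by
  obtain ⟨C, -, hC⟩ := hasBasis_cobounded_norm.mem_iff.1 (inter_mem hΩb hfg)
  obtain ⟨t₀, ht₀⟩ := (eventually_cobounded_le_norm (E := ℂ) (C + 1)).exists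
  have hC₀ : {z : ℂ | C < ‖z‖} ∈ 𝓝 t₀ :=
    (isOpen_lt continuous_const continuous_norm).mem_nhds (show C < ‖t₀‖ by linarith)
  refine (hf.analyticOnNhd hΩ).eqOn_of_preconnected_of_eventuallyEq (hg.analyticOnNhd hΩ) hΩc
    (hC (show C ≤ ‖t₀‖ by linarith)).1 ?_
  filter_upwards [hC₀] with z hz using (hC (le_of_lt hz)).2

theorem EuclideanSpace.norm_le_norm_of_forall_norm_apply_le {𝕜 ι : Type*} [RCLike 𝕜] [Fintype ι]
    {x y : EuclideanSpace 𝕜 ι} (h : ∀ i, ‖x i‖ ≤ ‖y i‖) : ‖x‖ ≤ ‖y‖ := by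
  rw [EuclideanSpace.norm_eq, EuclideanSpace.norm_eq]
  gcongr with i
  exact h i

local notation "ℂ^" n => EuclideanSpace ℂ (Fin n)

namespace Hartogs

variable {n : ℕ} [NeZero n]

noncomputable def updateFirst (z : ℂ^n) (w : ℂ) : ℂ^n := z + (w - z 0) • EuclideanSpace.single 0 1

@[simp]
theorem updateFirst_apply (z : ℂ^n) (w : ℂ) (i : Fin n) :
    updateFirst z w i = if i = 0 then w else z i := by
  by_cases h : i = 0 <;> simp [updateFirst, h]

@[simp]
theorem updateFirst_self (z : ℂ^n) : updateFirst z (z 0) = z := by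
  simp [updateFirst]

theorem norm_le_norm_updateFirst (z : ℂ^n) (w : ℂ) : ‖w‖ ≤ ‖updateFirst z w‖ := by
  simpa using PiLp.norm_apply_le (updateFirst z w) 0

theorem norm_updateFirst_zero_le (z : ℂ^n) (w : ℂ) : ‖updateFirst z 0‖ ≤ ‖updateFirst z w‖ :=
  EuclideanSpace.norm_le_norm_of_forall_norm_apply_le fun i => by
    by_cases h : i = 0 <;> simp [h]

theorem updateFirst_smul_zero (s : ℂ) (z : ℂ^n) : updateFirst (s • z) 0 = s • updateFirst z 0 := by
  ext i; by_cases h : i = 0 <;> simp [h]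

theorem differentiable_updateFirst : Differentiable ℂ fun p : (ℂ^n) × ℂ => updateFirst p.1 p.2 := by
  unfold updateFirst
  fun_prop

variable {r : ℝ} {f : (ℂ^n) → ℂ}

noncomputable def cauchySlice (f : (ℂ^n) → ℂ) (R : ℝ) (z : ℂ^n) : ℂ :=
  (2 * π * I)⁻¹ • ∮ w in C(0, R), (w - z 0)⁻¹ • f (updateFirst z w)

theorem differentiableOn_cauchySlice_integrand (hf : DifferentiableOn ℂ f {z | r < ‖z‖}) :
    DifferentiableOn ℂ (fun p : (ℂ^n) × ℂ => (p.2 - p.1 0)⁻¹ • f (updateFirst p.1 p.2))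
      {p | max r ‖p.1 0‖ < ‖p.2‖} := by
  rintro ⟨z, w⟩ hp
  obtain ⟨hrw, hzw⟩ : r < ‖w‖ ∧ ‖z 0‖ < ‖w‖ := max_lt_iff.1 hp
  have hkernel : DifferentiableAt ℂ (fun p : (ℂ^n) × ℂ => (p.2 - p.1 0)⁻¹) (z, w) :=
    ((differentiableAt_snd.sub ((EuclideanSpace.proj 0 : (ℂ^n) →L[ℂ] ℂ).differentiableAt.comp _
      differentiableAt_fst)).inv (sub_ne_zero.2 (ne_of_apply_ne norm hzw.ne')))
  have hf' : DifferentiableAt ℂ f (updateFirst z w) :=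
    hf.differentiableAt ((isOpen_lt continuous_const continuous_norm).mem_nhds
      (hrw.trans_le (norm_le_norm_updateFirst z w)))
  exact (hkernel.smul (hf'.comp (z, w) (differentiable_updateFirst (z, w)))).differentiableWithinAt

theorem differentiableAt_cauchySlice (hf : DifferentiableOn ℂ f {z | r < ‖z‖}) {R : ℝ} {z₀ : ℂ^n}
    (hR : max r ‖z₀ 0‖ < R) : DifferentiableAt ℂ (cauchySlice f R) z₀ := by
  have hR₀ : 0 < R := (le_max_right _ _).trans_lt hR |>.trans_le' (norm_nonneg _)
  unfold cauchySlice
  refine (differentiableAt_circleIntegral_of_differentiableOn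
    (isOpen_lt (by fun_prop) (by fun_prop)) (differentiableOn_cauchySlice_integrand hf)
    fun w hw => ?_).const_smul (2 * π * I)⁻¹
  rw [mem_sphere_zero_iff_norm, abs_of_pos hR₀] at hw
  show max r ‖z₀ 0‖ < ‖w‖
  rwa [hw]

theorem cauchySlice_eq_cauchySlice (hf : DifferentiableOn ℂ f {z | r < ‖z‖}) {R₁ R₂ : ℝ} {z : ℂ^n}
    (h₁ : max r ‖z 0‖ < R₁) (h₂ : max r ‖z 0‖ < R₂) : cauchySlice f R₁ z = cauchySlice f R₂ z := by
  wlog h : R₁ ≤ R₂ generalizing R₁ R₂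
  · exact (this h₂ h₁ (le_of_not_ge h)).symm
  have hdiff : ∀ w : ℂ, R₁ ≤ ‖w‖ →
      DifferentiableAt ℂ (fun w => (w - z 0)⁻¹ • f (updateFirst z w)) w := fun w hw =>
    ((differentiableOn_cauchySlice_integrand hf).differentiableAt
      ((isOpen_lt (by fun_prop) (by fun_prop)).mem_nhds (h₁.trans_le hw))).comp w
      (differentiableAt_const z |>.prodMk differentiableAt_id)
  rw [cauchySlice, cauchySlice, circleIntegral_eq_of_differentiable_on_annulus_off_countable
    ((le_max_right _ _).trans_lt h₁ |>.trans_le' (norm_nonneg _)) h countable_empty]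
  · exact fun w hw => (hdiff w (not_lt.1 fun h => hw.2 (mem_ball_zero_iff.2 h))).continuousAt
      |>.continuousWithinAt
  · exact fun w hw => hdiff w (not_le.1 fun h => hw.1.2 (mem_closedBall_zero_iff.2 h)).le

theorem cauchySlice_eq (hf : DifferentiableOn ℂ f {z | r < ‖z‖}) {R : ℝ} {z : ℂ^n}
    (hz : r < ‖updateFirst z 0‖) (hR : ‖z 0‖ < R) : cauchySlice f R z = f z := by
  have hslice : Differentiable ℂ fun w => f (updateFirst z w) := fun w =>
    (hf.differentiableAt ((isOpen_lt continuous_const continuous_norm).mem_nhds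
      (hz.trans_le (norm_updateFirst_zero_le z w)))).comp w
      (differentiable_updateFirst.comp (differentiable_const z |>.prodMk differentiable_id) w)
  rw [cauchySlice, hslice.diffContOnCl.circleIntegral_sub_inv_smul (by simpa using hR),
    updateFirst_self, inv_smul_smul₀ two_pi_I_ne_zero]

noncomputable def hartogsExtension (f : (ℂ^n) → ℂ) (r : ℝ) (z : ℂ^n) : ℂ :=
  cauchySlice f (max r ‖z 0‖ + 1) z

theorem differentiable_hartogsExtension (hf : DifferentiableOn ℂ f {z | r < ‖z‖}) :
    Differentiable ℂ (hartogsExtension f r) := by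
  intro z₀
  refine (differentiableAt_cauchySlice hf (R := max r ‖z₀ 0‖ + 2) (by linarith))
    |>.congr_of_eventuallyEq ?_
  have hnear : ∀ᶠ z in 𝓝 z₀, ‖z 0‖ < ‖z₀ 0‖ + 1 :=
    (continuous_norm.comp (EuclideanSpace.proj (0 : Fin n)).continuous).continuousAt.eventually_lt
      continuousAt_const (lt_add_one _)
  filter_upwards [hnear] with z hz
  refine cauchySlice_eq_cauchySlice hf (by linarith) (max_lt ?_ ?_) <;>
    linarith [le_max_left r ‖z₀ 0‖, le_max_right r ‖z₀ 0‖]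

theorem hartogsExtension_eq_of_lt_norm_updateFirst (hf : DifferentiableOn ℂ f {z | r < ‖z‖})
    {z : ℂ^n} (hz : r < ‖updateFirst z 0‖) : hartogsExtension f r z = f z :=
  cauchySlice_eq hf hz (by linarith [le_max_right r ‖z 0‖])

section IdentityPrinciple

variable {G : (ℂ^n) → ℂ} (hf : DifferentiableOn ℂ f {z | r < ‖z‖}) (hG : Differentiable ℂ G)
  (hGf : ∀ z, r < ‖updateFirst z 0‖ → G z = f z)
include hf hG hGf

theorem eq_of_updateFirst_zero_ne_zero {z : ℂ^n} (hz : r < ‖z‖) (hz₀ : updateFirst z 0 ≠ 0) :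
    G z = f z := by
  have hz' : 0 < ‖z‖ := norm_pos_iff.2 fun h => hz₀ (by simp [h, updateFirst])
  have hmem : ∀ s : ℂ, r / ‖z‖ < ‖s‖ → s • z ∈ {z : ℂ^n | r < ‖z‖} := fun s hs => by
    simpa [norm_smul, ← div_lt_iff₀ hz'] using hs
  have hfar : ∀ᶠ s in cobounded ℂ, G (s • z) = f (s • z) := by
    filter_upwards [eventually_cobounded_le_norm (r / ‖updateFirst z 0‖ + 1)] with s hs
    refine hGf _ ?_
    rw [updateFirst_smul_zero, norm_smul, ← div_lt_iff₀ (norm_pos_iff.2 hz₀)]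
    linarith
  simpa using eqOn_of_isPreconnected_of_eventuallyEq_cobounded
    (isOpen_lt continuous_const continuous_norm)
    (isPreconnected_setOf_lt_norm (by simp [Complex.rank_real_complex]) (r / ‖z‖))
    (setOf_lt_norm_mem_cobounded _) (hG.comp (differentiable_id.smul_const z)).differentiableOn
    (hf.comp (differentiable_id.smul_const z).differentiableOn hmem) hfar
    (show r / ‖z‖ < ‖(1 : ℂ)‖ by rwa [norm_one, div_lt_one hz'])

theorem eq_of_updateFirst_zero_eq_zero (hn : 2 ≤ n) {z : ℂ^n} (hz : r < ‖z‖)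
    (hz₀ : updateFirst z 0 = 0) : G z = f z := by
  have hz₀' : ∀ i, i ≠ 0 → z i = 0 := fun i hi => by simpa [hi] using congr($hz₀ i)
  set e : ℂ^n := EuclideanSpace.single ⟨1, by omega⟩ 1
  have he₀ : e 0 = 0 := by simp [e, Fin.ext_iff]
  have hmem : ∀ t : ℂ, z + t • e ∈ {z : ℂ^n | r < ‖z‖} := fun t =>
    hz.trans_le <| EuclideanSpace.norm_le_norm_of_forall_norm_apply_le fun i => by
      by_cases hi : i = 0
      · simp [hi, he₀]
      · simp only [hz₀' i hi, PiLp.add_apply, PiLp.smul_apply, zero_add, norm_zero]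
        exact norm_nonneg _
  have hfar : ∀ᶠ t in cobounded ℂ, G (z + t • e) = f (z + t • e) := by
    filter_upwards [eventually_cobounded_le_norm (r + 1)] with t ht
    refine hGf _ ?_
    have : updateFirst (z + t • e) 0 = t • e := by
      ext i
      by_cases hi : i = 0
      · simp [hi, he₀]
      · simp [hi, hz₀' i hi]
    rw [this, norm_smul, PiLp.norm_single, norm_one, mul_one]
    linarith
  simpa using eqOn_of_isPreconnected_of_eventuallyEq_cobounded isOpen_univ isPreconnected_univ
    univ_mem (hG.comp ((differentiable_id.smul_const e).const_add z)).differentiableOn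
    (hf.comp ((differentiable_id.smul_const e).const_add z).differentiableOn fun t _ => hmem t)
    hfar (mem_univ 0)

theorem eq_of_lt_norm (hn : 2 ≤ n) {z : ℂ^n} (hz : r < ‖z‖) : G z = f z := by
  by_cases hz₀ : updateFirst z 0 = 0
  · exact eq_of_updateFirst_zero_eq_zero hf hG hGf hn hz hz₀
  · exact eq_of_updateFirst_zero_ne_zero hf hG hGf hz hz₀

end IdentityPrinciple

end Hartogs

theorem extension_from_complement_of_ball_general (n : ℕ) (hn : 2 ≤ n) (r : ℝ)
    (f : EuclideanSpace ℂ (Fin n) → ℂ)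
    (hf : DifferentiableOn ℂ f {z : EuclideanSpace ℂ (Fin n) | r < ‖z‖}) :
    ∃ F : EuclideanSpace ℂ (Fin n) → ℂ, Differentiable ℂ F ∧
      ∀ z : EuclideanSpace ℂ (Fin n), r < ‖z‖ → F z = f z := by
  have : NeZero n := ⟨by omega⟩
  have hF := Hartogs.differentiable_hartogsExtension hf
  exact ⟨_, hF, fun z hz => Hartogs.eq_of_lt_norm hf hF
    (fun _ hw => Hartogs.hartogsExtension_eq_of_lt_norm_updateFirst hf hw) hn hz⟩

/-- Hartogs extension from the complement of a closed round ball: for `n ≥ 2`,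
every function holomorphic on `{z ∈ ℂⁿ : ‖z‖ > r}` is the restriction of an
entire function. -/
theorem extension_from_complement_of_ball (n : ℕ) (hn : 2 ≤ n) (r : ℝ) (hr : 0 < r)
    (f : EuclideanSpace ℂ (Fin n) → ℂ)
    (hf : DifferentiableOn ℂ f {z : EuclideanSpace ℂ (Fin n) | r < ‖z‖}) :
    ∃ F : EuclideanSpace ℂ (Fin n) → ℂ, Differentiable ℂ F ∧
      ∀ z : EuclideanSpace ℂ (Fin n), r < ‖z‖ → F z = f z :=
  extension_from_complement_of_ball_general n hn r f hf
end

section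
/- Let n ≥ 2 and let Ω ⊂ ℂⁿ be a domain with closure(Ω) ≠ ℂⁿ. Suppose there is an entire function h : ℂⁿ → ℂ whose zero set Z = h⁻¹(0) is nonempty and satisfies Z ⊆ closure(Ω). Then there exists a function f holomorphic on ℂⁿ \ closure(Ω) that is not the restriction of any entire function: for every F holomorphic on all of ℂⁿ, F does not agree with f on ℂⁿ \ closure(Ω). (Consequently, by Theorem 1.2, Hartogs extension fails for Ω.) -/
open Set Metric

/-- Mechanism behind Corollary 1.4: if `closure Ω` contains the (nonempty) zero
set of an entire function, then some function holomorphic on `ℂⁿ \ closure Ω`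
is not the restriction of any entire function. -/
theorem obstruction_from_complex_hypersurface (n : ℕ) (hn : 2 ≤ n)
    (Ω : Set (EuclideanSpace ℂ (Fin n)))
    (hΩopen : IsOpen Ω) (hΩconn : IsConnected Ω)
    (hne : closure Ω ≠ Set.univ)
    (h : EuclideanSpace ℂ (Fin n) → ℂ) (hh : Differentiable ℂ h)
    (hZne : (h ⁻¹' {0}).Nonempty) (hZsub : h ⁻¹' {0} ⊆ closure Ω) :
    ∃ f : EuclideanSpace ℂ (Fin n) → ℂ, DifferentiableOn ℂ f (closure Ω)ᶜ ∧
      ∀ F : EuclideanSpace ℂ (Fin n) → ℂ, Differentiable ℂ F →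
        ¬ EqOn F f (closure Ω)ᶜ := by
  obtain ⟨z₀, hz₀⟩ := hZne
  have hz₀0 : h z₀ = 0 := hz₀
  -- points outside closure Ω have h ≠ 0
  have hne' : ∀ z ∈ (closure Ω)ᶜ, h z ≠ 0 := by
    intro z hz hz0
    exact hz (hZsub hz0)
  refine ⟨fun z => (h z)⁻¹, ?_, ?_⟩
  · intro z hz
    exact ((hh z).differentiableWithinAt.inv (hne' z hz))
  · intro F hF hEq
    -- a point outside closure Ω
    obtain ⟨a, ha⟩ : ((closure Ω)ᶜ).Nonempty := by
      rw [nonempty_compl]; exact hne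
    set U : Set (EuclideanSpace ℂ (Fin n)) := (closure Ω)ᶜ with hU
    have hUopen : IsOpen U := isClosed_closure.isOpen_compl
    -- g := F * h - 1 vanishes on U
    set g : EuclideanSpace ℂ (Fin n) → ℂ := fun z => F z * h z - 1 with hg
    have hgdiff : Differentiable ℂ g := (hF.mul hh).sub_const 1
    have hgU : ∀ z ∈ U, g z = 0 := by
      intro z hz
      have : F z = (h z)⁻¹ := hEq hz
      simp [hg, this, inv_mul_cancel₀ (hne' z hz)]
    -- restrict to the line through a and z₀
    set φ : ℂ → EuclideanSpace ℂ (Fin n) := fun t => a + t • (z₀ - a) with hφ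
    have hφdiff : Differentiable ℂ φ := by
      apply Differentiable.const_add
      exact (differentiable_id.smul_const (z₀ - a))
    have hcomp : Differentiable ℂ (g ∘ φ) := hgdiff.comp hφdiff
    have hanal : AnalyticOnNhd ℂ (g ∘ φ) Set.univ :=
      Complex.analyticOnNhd_univ_iff_differentiable.2 hcomp
    have hφ0 : φ 0 = a := by simp [hφ]
    have hφ1 : φ 1 = z₀ := by simp [hφ]
    -- g ∘ φ vanishes near 0
    have hev : (g ∘ φ) =ᶠ[nhds 0] 0 := by
      have hmem : φ ⁻¹' U ∈ nhds (0 : ℂ) := by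
        apply (hUopen.preimage hφdiff.continuous).mem_nhds
        simp [mem_preimage, hφ0, ha]
      filter_upwards [hmem] with t ht
      exact hgU _ ht
    have := hanal.eqOn_zero_of_preconnected_of_eventuallyEq_zero
      isPreconnected_univ (mem_univ (0 : ℂ)) hev (mem_univ (1 : ℂ))
    simp only [Function.comp_apply, hφ1, Pi.zero_apply, hg] at this
    rw [hz₀0, mul_zero] at this
    norm_num at this
end

section
/- Let n ≥ 2 and let Ω ⊂ ℂⁿ be a domain with smooth connected boundary M. Then the global obstruction set M_obs, consisting of all global obstruction points of M, is a closed subset of ℂⁿ. -/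
open Set Metric

/-- The global obstruction set `M_obs` of Section 7: the set of points `z` of
`M = frontier Ω` at which there exist functions `f⁻` holomorphic on `Ω⁻ = Ω` and
`f⁺` holomorphic on `Ω⁺ = ℂⁿ \ closure Ω`, neither of which extends
holomorphically across `z`. -/
def GlobalObstructionSet (n : ℕ) (Ω : Set (EuclideanSpace ℂ (Fin n))) :
    Set (EuclideanSpace ℂ (Fin n)) :=
  {z | z ∈ frontier Ω ∧
    ∃ (fm fp : EuclideanSpace ℂ (Fin n) → ℂ),
      DifferentiableOn ℂ fm Ω ∧ DifferentiableOn ℂ fp (closure Ω)ᶜ ∧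
      (¬ ∃ (W : Set (EuclideanSpace ℂ (Fin n))) (F : EuclideanSpace ℂ (Fin n) → ℂ),
        IsOpen W ∧ z ∈ W ∧ DifferentiableOn ℂ F W ∧ EqOn F fm (W ∩ Ω)) ∧
      (¬ ∃ (W : Set (EuclideanSpace ℂ (Fin n))) (F : EuclideanSpace ℂ (Fin n) → ℂ),
        IsOpen W ∧ z ∈ W ∧ DifferentiableOn ℂ F W ∧ EqOn F fp (W ∩ (closure Ω)ᶜ))}

open Set Metric Filter Topology

section Aux

variable {E : Type*} [NormedAddCommGroup E] [NormedSpace ℂ E]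

/-- Cauchy-type estimate: a bounded holomorphic function on a ball has controlled
derivative at the center.  Proved by applying the Schwarz lemma on complex lines. -/
lemma cauchyBound {f : E → ℂ} {x : E} {r C : ℝ} (hr : 0 < r)
    (hd : DifferentiableOn ℂ f (ball x r)) (hb : ∀ y ∈ ball x r, ‖f y‖ ≤ C) :
    ‖fderiv ℂ f x‖ ≤ 2 * C / r := by
  have hC : 0 ≤ C := le_trans (norm_nonneg _) (hb x (mem_ball_self hr))
  have hdiv : 0 ≤ 2 * C / r := by positivity
  refine ContinuousLinearMap.opNorm_le_bound _ hdiv fun v => ?_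
  rcases eq_or_ne v 0 with rfl | hv
  · simp [hdiv, mul_nonneg]
  have hvn : 0 < ‖v‖ := norm_pos_iff.mpr hv
  set ρ : ℝ := r / ‖v‖ with hρdef
  have hρ0 : 0 < ρ := div_pos hr hvn
  set φ : ℂ → ℂ := fun t => f (x + t • v) with hφdef
  have hline : ∀ t : ℂ, HasDerivAt (fun s : ℂ => x + s • v) v t := by
    intro t
    simpa using ((hasDerivAt_id t).smul_const v).const_add x
  have hmem : ∀ t ∈ ball (0:ℂ) ρ, x + t • v ∈ ball x r := by
    intro t ht
    have : dist (x + t • v) x = ‖t‖ * ‖v‖ := by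
      rw [dist_eq_norm, add_sub_cancel_left, norm_smul]
    rw [mem_ball, this]
    have ht' : ‖t‖ < ρ := by simpa [dist_eq_norm] using ht
    calc ‖t‖ * ‖v‖ < ρ * ‖v‖ := by gcongr
      _ = r := by rw [hρdef, div_mul_cancel₀ _ hvn.ne']
  have hdiffAt : ∀ t ∈ ball (0:ℂ) ρ, HasDerivAt φ (fderiv ℂ f (x + t • v) v) t := by
    intro t ht
    have h1 : DifferentiableAt ℂ f (x + t • v) :=
      (hd _ (hmem t ht)).differentiableAt (isOpen_ball.mem_nhds (hmem t ht))
    exact h1.hasFDerivAt.comp_hasDerivAt t (hline t)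
  have hφd : DifferentiableOn ℂ φ (ball (0:ℂ) ρ) := fun t ht =>
    (hdiffAt t ht).differentiableAt.differentiableWithinAt
  have hderiv0 : deriv φ 0 = fderiv ℂ f x v := by
    have := (hdiffAt 0 (mem_ball_self hρ0)).deriv
    simpa using this
  have key : ∀ η : ℝ, 0 < η → ‖fderiv ℂ f x v‖ ≤ (2 * C + η) / ρ := by
    intro η hη
    have hmaps : MapsTo φ (ball (0:ℂ) ρ) (ball (φ 0) (2 * C + η)) := by
      intro t ht
      have h1 : ‖φ t‖ ≤ C := hb _ (hmem t ht)
      have h2 : ‖φ 0‖ ≤ C := hb _ (hmem 0 (mem_ball_self hρ0))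
      have : dist (φ t) (φ 0) ≤ 2 * C := by
        calc dist (φ t) (φ 0) ≤ ‖φ t‖ + ‖φ 0‖ := dist_le_norm_add_norm _ _
          _ ≤ 2 * C := by linarith
      rw [mem_ball]
      linarith
    have := Complex.norm_deriv_le_div_of_mapsTo_ball hφd (hmaps.mono_right ball_subset_closedBall) hρ0
    rwa [hderiv0] at this
  have key2 : ∀ ε : ℝ, 0 < ε → ‖fderiv ℂ f x v‖ ≤ 2 * C / r * ‖v‖ + ε := by
    intro ε hε
    have hη : 0 < ε * r / ‖v‖ := by positivity
    have := key _ hη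
    calc ‖fderiv ℂ f x v‖ ≤ (2 * C + ε * r / ‖v‖) / ρ := this
      _ = 2 * C / r * ‖v‖ + ε := by
          rw [hρdef]
          field_simp
  exact le_of_forall_pos_le_add key2

end Aux

section Aux2

variable {E : Type*} [NormedAddCommGroup E] [NormedSpace ℂ E]

/-- A filter version of the metric characterization of uniformly Cauchy families. -/
lemma uniformCauchySeqOn_iff_dist {ι α β : Type*} [PseudoMetricSpace β]
    {F : ι → α → β} {l : Filter ι} {s : Set α} :
    UniformCauchySeqOn F l s ↔
      ∀ ε > 0, ∀ᶠ p in l ×ˢ l, ∀ x ∈ s, dist (F p.1 x) (F p.2 x) < ε := by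
  constructor
  · intro h ε hε
    exact h _ (dist_mem_uniformity hε)
  · intro h u hu
    obtain ⟨ε, hε, hsub⟩ := mem_uniformity_dist.mp hu
    exact (h ε hε).mono fun p hp x hx => hsub (hp x hx)

/-- Weierstrass-type theorem: a uniform limit (along any nontrivial filter) of
holomorphic functions on a ball is holomorphic on the half ball. -/
lemma holoLimit {ι : Type*} {l : Filter ι} [l.NeBot] {F : ι → E → ℂ} {G : E → ℂ}
    {z : E} {R : ℝ} (hR : 0 < R)
    (hd : ∀ δ, DifferentiableOn ℂ (F δ) (ball z R))
    (hu : TendstoUniformlyOn F G l (ball z R)) :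
    DifferentiableOn ℂ G (ball z (R / 2)) := by
  set s : Set E := ball z (R / 2) with hsdef
  have hsub : s ⊆ ball z R := ball_subset_ball (by linarith)
  -- uniform Cauchy for the derivatives
  have hcauchy : UniformCauchySeqOn (fun δ => fderiv ℂ (F δ)) l s := by
    rw [uniformCauchySeqOn_iff_dist]
    intro ε hε
    have hF := uniformCauchySeqOn_iff_dist.mp hu.uniformCauchySeqOn (ε * R / 8)
      (by positivity)
    filter_upwards [hF] with p hp y hy
    have hball : ball y (R / 2) ⊆ ball z R := by
      intro w hw
      rw [mem_ball] at *
      calc dist w z ≤ dist w y + dist y z := dist_triangle _ _ _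
        _ < R / 2 + R / 2 := add_lt_add hw hy
        _ = R := by ring
    have hdsub : DifferentiableOn ℂ (fun w => F p.1 w - F p.2 w) (ball y (R / 2)) :=
      ((hd p.1).mono hball).sub ((hd p.2).mono hball)
    have hbsub : ∀ w ∈ ball y (R / 2), ‖F p.1 w - F p.2 w‖ ≤ ε * R / 8 := fun w hw => by
      have := hp w (hball hw)
      rw [dist_eq_norm] at this
      exact this.le
    have hest := cauchyBound (by positivity : (0:ℝ) < R / 2) hdsub hbsub
    have hyR : y ∈ ball z R := hsub hy
    have h1 : DifferentiableAt ℂ (F p.1) y :=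
      ((hd p.1) y hyR).differentiableAt (isOpen_ball.mem_nhds hyR)
    have h2 : DifferentiableAt ℂ (F p.2) y :=
      ((hd p.2) y hyR).differentiableAt (isOpen_ball.mem_nhds hyR)
    rw [fderiv_fun_sub h1 h2] at hest
    rw [dist_eq_norm]
    calc ‖fderiv ℂ (F p.1) y - fderiv ℂ (F p.2) y‖ ≤ 2 * (ε * R / 8) / (R / 2) := hest
      _ = ε / 2 := by field_simp; ring
      _ < ε := by linarith
  -- pointwise limits of the derivatives
  have hpt : ∀ y ∈ s, ∃ A : E →L[ℂ] ℂ, Tendsto (fun δ => fderiv ℂ (F δ) y) l (𝓝 A) := by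
    intro y hy
    have hC : Cauchy (map (fun δ => fderiv ℂ (F δ) y) l) := by
      rw [cauchy_map_iff]
      refine ⟨‹_›, ?_⟩
      intro u hu'
      have := hcauchy u hu'
      exact this.mono fun p hp => hp y hy
    obtain ⟨A, hA⟩ := CompleteSpace.complete hC
    exact ⟨A, hA⟩
  choose! G' hG' using hpt
  have huG' : TendstoUniformlyOn (fun δ => fderiv ℂ (F δ)) G' l s :=
    hcauchy.tendstoUniformlyOn_of_tendsto hG'
  have hasF : ∀ y ∈ s, HasFDerivAt G (G' y) y := by
    intro y hy
    refine hasFDerivAt_of_tendstoUniformlyOn isOpen_ball huG' (fun δ x hx => ?_)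
      (fun x hx => hu.tendsto_at (hsub hx)) hy
    exact (((hd δ) x (hsub hx)).differentiableAt (isOpen_ball.mem_nhds (hsub hx))).hasFDerivAt
  exact fun y hy => (hasF y hy).differentiableAt.differentiableWithinAt

omit [NormedSpace ℂ E] in
/-- Pointwise convergence plus a uniform Lipschitz estimate upgrade to uniform
convergence on a compact set. -/
lemma unifOfEquicont {ι : Type*} {𝒰 : Filter ι} [𝒰.NeBot] {S : Set ι} (hS : S ∈ 𝒰)
    {K : Set E} (hK : IsCompact K) {F : ι → E → ℂ} {G : E → ℂ} {L : ℝ} (hL : 0 ≤ L)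
    (hlip : ∀ δ ∈ S, ∀ x ∈ K, ∀ y ∈ K, ‖F δ x - F δ y‖ ≤ L * dist x y)
    (hpt : ∀ x ∈ K, Tendsto (fun δ => F δ x) 𝒰 (𝓝 (G x))) :
    TendstoUniformlyOn F G 𝒰 K := by
  rw [Metric.tendstoUniformlyOn_iff]
  intro ε hε
  set ρ : ℝ := ε / (6 * (L + 1)) with hρdef
  have hρ : 0 < ρ := by positivity
  obtain ⟨T, hTK, hcov⟩ := hK.elim_nhds_subcover (fun t => ball t ρ)
    (fun t _ => ball_mem_nhds t hρ)
  have hev : ∀ᶠ δ in 𝒰, δ ∈ S ∧ ∀ t ∈ T, dist (F δ t) (G t) < ε / 3 := by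
    refine (eventually_of_mem hS fun δ h => h).and ?_
    rw [eventually_all_finset]
    intro t ht
    exact (Metric.tendsto_nhds.mp (hpt t (hTK t ht))) (ε / 3) (by positivity)
  filter_upwards [hev] with δ hδ x hx
  obtain ⟨t, htT, hxt⟩ : ∃ t ∈ T, x ∈ ball t ρ := by
    have := hcov hx
    simpa using this
  have htK : t ∈ K := hTK t htT
  have hGlip : ‖G x - G t‖ ≤ L * dist x t := by
    have h1 : Tendsto (fun δ => ‖F δ x - F δ t‖) 𝒰 (𝓝 ‖G x - G t‖) :=
      ((hpt x hx).sub (hpt t htK)).norm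
    have hb : ∀ᶠ δ in 𝒰, ‖F δ x - F δ t‖ ≤ L * dist x t :=
      eventually_of_mem hS fun δ hδS => hlip δ hδS x hx t htK
    exact le_of_tendsto h1 hb
  have hdxt : dist x t < ρ := by rwa [mem_ball] at hxt
  have h6 : (L + 1) * ρ = ε / 6 := by
    rw [hρdef]
    field_simp
  have hLρ : L * dist x t ≤ ε / 6 := by
    calc L * dist x t ≤ L * ρ := mul_le_mul_of_nonneg_left hdxt.le hL
      _ ≤ (L + 1) * ρ := by nlinarith [hρ.le]
      _ = ε / 6 := h6
  calc dist (G x) (F δ x)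
      ≤ dist (G x) (G t) + dist (G t) (F δ t) + dist (F δ t) (F δ x) :=
        dist_triangle4 _ _ _ _
    _ ≤ L * dist x t + ε / 3 + L * dist x t := by
        have h1 : dist (G x) (G t) ≤ L * dist x t := by rwa [dist_eq_norm]
        have h2 : dist (G t) (F δ t) < ε / 3 := by
          rw [dist_comm]; exact hδ.2 t htT
        have h3 : dist (F δ t) (F δ x) ≤ L * dist x t := by
          have := hlip δ hδ.1 t htK x hx
          rw [dist_comm t x] at this
          rw [dist_eq_norm]
          exact this
        linarith
    _ ≤ ε / 6 + ε / 3 + ε / 6 := by linarith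
    _ < ε := by linarith

end Aux2

section Main

open Classical in
/-- Key propagation lemma: if `z j → z₀` and for each `j` there is a function
`f j` holomorphic on the open set `U` which does not extend holomorphically
across `z j`, then there is a single function holomorphic on `U` which does not
extend across `z₀`.  This is proved by a Baire category argument on a compact
product space of coefficient sequences for the series `∑ εⱼ • f j`, together
with Montel/Weierstrass-type compactness for candidate extensions. -/
lemma exists_nonextendable {E : Type*} [NormedAddCommGroup E] [NormedSpace ℂ E]
    [ProperSpace E] {U : Set E} (hU : IsOpen U) {z : ℕ → E} {z₀ : E}
    (hz : Tendsto z atTop (𝓝 z₀)) {f : ℕ → E → ℂ}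
    (hf : ∀ j, DifferentiableOn ℂ (f j) U)
    (hne : ∀ j, ¬ ∃ (W : Set E) (F : E → ℂ), IsOpen W ∧ z j ∈ W ∧
        DifferentiableOn ℂ F W ∧ EqOn F (f j) (W ∩ U)) :
    ∃ g : E → ℂ, DifferentiableOn ℂ g U ∧ ¬ ∃ (W : Set E) (F : E → ℂ),
      IsOpen W ∧ z₀ ∈ W ∧ DifferentiableOn ℂ F W ∧ EqOn F g (W ∩ U) := by
  -- compact exhaustion-type sets
  set K : ℕ → Set E := fun j => closedBall 0 j \ Metric.thickening (1/(j+1)) Uᶜ with hKdef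
  have hKcomp : ∀ j, IsCompact (K j) := fun j =>
    (isCompact_closedBall _ _).diff Metric.isOpen_thickening
  have hKU : ∀ j, K j ⊆ U := by
    intro j y hy
    by_contra hyU
    refine hy.2 (Metric.mem_thickening_iff.mpr ⟨y, hyU, ?_⟩)
    simpa using (by positivity : (0:ℝ) < 1/((j:ℝ)+1))
  -- bounds on the `f j` over `K j`
  have hBex : ∀ j, ∃ C : ℝ, 0 ≤ C ∧ ∀ y ∈ K j, ‖f j y‖ ≤ C := by
    intro j
    obtain ⟨C, hC⟩ := (hKcomp j).exists_bound_of_continuousOn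
      ((hf j).continuousOn.mono (hKU j))
    exact ⟨max C 0, le_max_right _ _, fun y hy => le_trans (hC y hy) (le_max_left _ _)⟩
  choose B hB0 hBb using hBex
  -- coefficients
  set c : ℕ → ℝ := fun j => (1/2 : ℝ)^j / (1 + B j) with hcdef
  have hc0 : ∀ j, 0 < c j := fun j => by
    have := hB0 j
    positivity
  have hcB : ∀ j, c j * B j ≤ (1/2 : ℝ)^j := by
    intro j
    have h1 : (0:ℝ) < 1 + B j := by linarith [hB0 j]
    rw [hcdef]
    rw [div_mul_eq_mul_div, div_le_iff₀ h1]
    nlinarith [pow_pos (by norm_num : (0:ℝ) < 1/2) j, hB0 j,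
      pow_nonneg (by norm_num : (0:ℝ) ≤ 1/2) j]
  -- the coefficient space
  set X := (∀ j : ℕ, (closedBall (0:ℂ) (c j) : Set ℂ)) with hXdef
  haveI : ∀ j, CompactSpace (closedBall (0:ℂ) (c j) : Set ℂ) := fun j =>
    isCompact_iff_compactSpace.mp (isCompact_closedBall _ _)
  haveI : ∀ j, Nonempty (closedBall (0:ℂ) (c j) : Set ℂ) := fun j =>
    ⟨⟨0, mem_closedBall_self (hc0 j).le⟩⟩
  -- the series
  set g : X → E → ℂ := fun ε x => ∑' j, ((ε j : ℂ) * f j x) with hgdef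
  -- coefficient bound
  have hcoef : ∀ (ε : X) j, ‖(ε j : ℂ)‖ ≤ c j := fun ε j =>
    mem_closedBall_zero_iff.mp (ε j).2
  have hterm : ∀ (ε : X) j, ∀ y ∈ K j, ‖(ε j : ℂ) * f j y‖ ≤ (1/2 : ℝ)^j := by
    intro ε j y hy
    rw [norm_mul]
    calc ‖(ε j : ℂ)‖ * ‖f j y‖ ≤ c j * B j := by
          apply mul_le_mul (hcoef ε j) (hBb j y hy) (norm_nonneg _) (hc0 j).le
      _ ≤ (1/2 : ℝ)^j := hcB j
  -- local geometry: small closed balls are eventually inside `K j`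
  have hK3 : ∀ x ∈ U, ∃ ρ > 0, ∃ j₀ : ℕ, ∀ j, j₀ ≤ j → closedBall x ρ ⊆ K j := by
    intro x hx
    obtain ⟨ρ₀, hρ₀, hball⟩ := Metric.isOpen_iff.mp hU x hx
    refine ⟨ρ₀/4, by positivity, ?_⟩
    obtain ⟨j₀, hj₀⟩ := exists_nat_ge (max (‖x‖ + ρ₀/4) (4/ρ₀))
    refine ⟨j₀, fun j hj y hy => ?_⟩
    have hj' : max (‖x‖ + ρ₀/4) (4/ρ₀) ≤ (j : ℝ) := le_trans hj₀ (by exact_mod_cast hj)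
    have hy' : dist y x ≤ ρ₀/4 := mem_closedBall.mp hy
    constructor
    · rw [mem_closedBall, dist_zero_right]
      calc ‖y‖ ≤ ‖x‖ + dist y x := by
            rw [dist_eq_norm]
            simpa using norm_add_le x (y - x)
        _ ≤ ‖x‖ + ρ₀/4 := by linarith
        _ ≤ (j:ℝ) := le_trans (le_max_left _ _) hj'
    · intro hthick
      obtain ⟨w, hwU, hwd⟩ := Metric.mem_thickening_iff.mp hthick
      -- `w ∉ ball x ρ₀`, so `dist y w` is large
      have hw' : ρ₀ ≤ dist x w := by
        by_contra hlt
        push_neg at hlt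
        exact hwU (hball (by rwa [mem_ball, dist_comm]))
      have h4ρ : 4/ρ₀ ≤ (j:ℝ) := le_trans (le_max_right _ _) hj'
      have hjinv : 1/((j:ℝ)+1) ≤ ρ₀/4 := by
        rw [div_le_iff₀ (by positivity)]
        rw [div_le_iff₀ (by positivity)] at h4ρ
        nlinarith
      have : dist x w ≤ dist x y + dist y w := dist_triangle _ _ _
      rw [dist_comm x y] at this
      have : dist y w < ρ₀/4 := lt_of_lt_of_le hwd hjinv
      linarith [hw', dist_triangle x y w, (dist_comm x y ▸ hy' : dist x y ≤ ρ₀/4)]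
  -- summability
  have hsum : ∀ (ε : X), ∀ x ∈ U, Summable (fun j => (ε j : ℂ) * f j x) := by
    intro ε x hx
    obtain ⟨ρ, hρ, j₀, hj₀⟩ := hK3 x hx
    apply Summable.of_norm_bounded_eventually (g := fun j => (1/2 : ℝ)^j) summable_geometric_two
    rw [Nat.cofinite_eq_atTop]
    filter_upwards [eventually_ge_atTop j₀] with j hj
    exact hterm ε j x (hj₀ j hj (mem_closedBall_self hρ.le))
  -- holomorphy of the sums
  have hg1 : ∀ ε : X, DifferentiableOn ℂ (g ε) U := by
    intro ε x hx
    obtain ⟨ρ, hρ, j₀, hj₀⟩ := hK3 x hx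
    have hballU : ball x ρ ⊆ U := fun y hy => hKU j₀ (hj₀ j₀ le_rfl (ball_subset_closedBall hy))
    have hPd : ∀ N : ℕ, DifferentiableOn ℂ (fun y => ∑ j ∈ Finset.range N, (ε j : ℂ) * f j y)
        (ball x ρ) := by
      intro N
      apply DifferentiableOn.fun_sum
      intro j _
      exact ((hf j).mono hballU).const_mul _
    have hbound : ∀ᶠ (j : ℕ) in cofinite, ∀ y ∈ ball x ρ, ‖(ε j : ℂ) * f j y‖ ≤ (1/2 : ℝ)^j := by
      rw [Nat.cofinite_eq_atTop]
      filter_upwards [eventually_ge_atTop j₀] with j hj y hy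
      exact hterm ε j y (hj₀ j hj (ball_subset_closedBall hy))
    have hu : TendstoUniformlyOn (fun N y => ∑ j ∈ Finset.range N, (ε j : ℂ) * f j y) (g ε)
        atTop (ball x ρ) := fun v hv =>
      tendsto_finset_range.eventually
        (tendstoUniformlyOn_tsum_of_cofinite_eventually summable_geometric_two hbound v hv)
    have := holoLimit hρ hPd hu
    have hxball : x ∈ ball x (ρ/2) := mem_ball_self (by positivity)
    exact ((this x hxball).differentiableAt (isOpen_ball.mem_nhds hxball)).differentiableWithinAt
  -- continuity in the coefficients
  have hg2 : ∀ x ∈ U, Continuous fun ε : X => g ε x := by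
    intro x hx
    obtain ⟨ρ, hρ, j₀, hj₀⟩ := hK3 x hx
    have hQc : ∀ N : ℕ, Continuous fun ε : X => ∑ j ∈ Finset.range N, (ε j : ℂ) * f j x := by
      intro N
      apply continuous_finset_sum
      intro j _
      exact (continuous_subtype_val.comp (continuous_apply j)).mul continuous_const
    have hbound : ∀ᶠ (j : ℕ) in Filter.cofinite, ∀ ε ∈ (univ : Set X),
        ‖(ε j : ℂ) * f j x‖ ≤ (1/2 : ℝ)^j := by
      rw [Nat.cofinite_eq_atTop]
      filter_upwards [eventually_ge_atTop j₀] with j hj ε _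
      exact hterm ε j x (hj₀ j hj (mem_closedBall_self hρ.le))
    have hu : TendstoUniformlyOn (fun N (ε : X) => ∑ j ∈ Finset.range N, (ε j : ℂ) * f j x)
        (fun ε => g ε x) atTop (univ : Set X) := fun v hv =>
      tendsto_finset_range.eventually
        (tendstoUniformlyOn_tsum_of_cofinite_eventually summable_geometric_two hbound v hv)
    rw [tendstoUniformlyOn_univ] at hu
    exact hu.continuous (Eventually.of_forall hQc).frequently
  -- difference of two sums differing at one coefficient
  have hg3 : ∀ (ε ε' : X) (j' : ℕ), (∀ j, j ≠ j' → ε j = ε' j) → ∀ x ∈ U,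
      g ε' x - g ε x = ((ε' j' : ℂ) - (ε j' : ℂ)) * f j' x := by
    intro ε ε' j' hj x hx
    rw [hgdef]
    rw [← Summable.tsum_sub (hsum ε' x hx) (hsum ε x hx)]
    rw [tsum_eq_single j' ?_]
    · ring
    · intro j hjne
      rw [hj j hjne]
      ring
  -- main contradiction setup
  by_contra hcon
  push_neg at hcon
  have hext : ∀ h : E → ℂ, DifferentiableOn ℂ h U → ∃ (W : Set E) (F : E → ℂ),
      IsOpen W ∧ z₀ ∈ W ∧ DifferentiableOn ℂ F W ∧ EqOn F h (W ∩ U) := hcon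
  -- the Baire sets
  set P : ℕ → Set X := fun m => {ε | ∃ F : E → ℂ,
      DifferentiableOn ℂ F (ball z₀ (1/(m+1))) ∧
      (∀ y ∈ ball z₀ (1/(m+1)), ‖F y‖ ≤ m) ∧
      EqOn F (g ε) (ball z₀ (1/(m+1)) ∩ U)} with hPdef
  have hcover : (⋃ m, closure (P m)) = univ := by
    rw [eq_univ_iff_forall]
    intro ε
    rw [mem_iUnion]
    obtain ⟨W, F, hWo, hWz, hFd, hFeq⟩ := hext (g ε) (hg1 ε)
    obtain ⟨r', hr', hball⟩ := Metric.isOpen_iff.mp hWo z₀ hWz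
    obtain ⟨C, hC⟩ := (isCompact_closedBall z₀ (r'/2)).exists_bound_of_continuousOn
      (hFd.continuousOn.mono
        ((closedBall_subset_ball (by linarith : r'/2 < r')).trans hball))
    obtain ⟨m₁, hm₁⟩ := exists_nat_ge C
    obtain ⟨m₂, hm₂⟩ := exists_nat_ge (2/r')
    refine ⟨max m₁ m₂, subset_closure ?_⟩
    have hmr : 1/((max m₁ m₂ : ℕ) + 1 : ℝ) ≤ r'/2 := by
      have h2 : (2/r' : ℝ) ≤ (max m₁ m₂ : ℕ) := by
        calc (2/r' : ℝ) ≤ m₂ := hm₂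
          _ ≤ ((max m₁ m₂ : ℕ) : ℝ) := by exact_mod_cast Nat.le_max_right m₁ m₂
      rw [div_le_iff₀ (by positivity)]
      rw [div_le_iff₀ hr'] at h2
      nlinarith
    have hsub1 : ball z₀ (1/((max m₁ m₂ : ℕ) + 1 : ℝ)) ⊆ closedBall z₀ (r'/2) := by
      apply ball_subset_closedBall.trans
      exact closedBall_subset_closedBall hmr
    have hsub2 : ball z₀ (1/((max m₁ m₂ : ℕ) + 1 : ℝ)) ⊆ W :=
      hsub1.trans ((closedBall_subset_ball (by linarith : r'/2 < r')).trans hball)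
    refine ⟨F, hFd.mono hsub2, fun y hy => ?_, fun y hy => hFeq ⟨hsub2 hy.1, hy.2⟩⟩
    calc ‖F y‖ ≤ C := hC y (hsub1 hy)
      _ ≤ m₁ := hm₁
      _ ≤ ((max m₁ m₂ : ℕ) : ℝ) := by exact_mod_cast Nat.le_max_left m₁ m₂
  -- Baire category
  obtain ⟨m, hm⟩ := nonempty_interior_of_iUnion_of_closed
    (fun m => isClosed_closure (s := P m)) hcover
  obtain ⟨ε₀, hε₀⟩ := hm
  set r : ℝ := 1/(m+1) with hrdef
  have hr : 0 < r := by positivity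
  -- Montel step : `closure (P m) ⊆ Q`
  set Q : Set X := {ε | ∃ F : E → ℂ, DifferentiableOn ℂ F (ball z₀ (r/4)) ∧
      EqOn F (g ε) (ball z₀ (r/4) ∩ U)} with hQdef
  have hPQ : closure (P m) ⊆ Q := by
    intro ε hε
    have hcl : ClusterPt ε (𝓟 (P m)) := mem_closure_iff_clusterPt.mp hε
    haveI : (𝓝 ε ⊓ 𝓟 (P m)).NeBot := hcl
    set 𝒰 : Ultrafilter X := Ultrafilter.of (𝓝 ε ⊓ 𝓟 (P m)) with h𝒰def
    have h𝒰le : (𝒰 : Filter X) ≤ 𝓝 ε ⊓ 𝓟 (P m) := Ultrafilter.of_le _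
    have hS : P m ∈ 𝒰 := le_principal_iff.mp (h𝒰le.trans inf_le_right)
    have h𝒰ε : (𝒰 : Filter X) ≤ 𝓝 ε := h𝒰le.trans inf_le_left
    -- candidate extensions
    set Fδ : X → E → ℂ := fun δ => if h : δ ∈ P m then h.choose else fun _ => 0 with hFδdef
    have hFδspec : ∀ δ (h : δ ∈ P m),
        DifferentiableOn ℂ (Fδ δ) (ball z₀ r) ∧
        (∀ y ∈ ball z₀ r, ‖Fδ δ y‖ ≤ m) ∧
        EqOn (Fδ δ) (g δ) (ball z₀ r ∩ U) := by
      intro δ h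
      have : Fδ δ = h.choose := dif_pos h
      rw [this]
      exact h.choose_spec
    have hd_all : ∀ δ, DifferentiableOn ℂ (Fδ δ) (ball z₀ r) := by
      intro δ
      by_cases h : δ ∈ P m
      · exact (hFδspec δ h).1
      · rw [hFδdef]
        simp only [dif_neg h]
        exact differentiableOn_const 0
    set Kc : Set E := closedBall z₀ (3*r/4) with hKcdef
    have hKcball : Kc ⊆ ball z₀ r := closedBall_subset_ball (by linarith)
    -- Lipschitz estimates
    set L : ℝ := 2 * m / (r/4) with hLdef
    have hL0 : 0 ≤ L := by positivity
    have hlip : ∀ δ ∈ P m, ∀ x ∈ Kc, ∀ y ∈ Kc, ‖Fδ δ x - Fδ δ y‖ ≤ L * dist x y := by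
      intro δ hδ x hx y hy
      have hfd : ∀ w ∈ Kc, DifferentiableAt ℂ (Fδ δ) w := fun w hw =>
        ((hd_all δ) w (hKcball hw)).differentiableAt (isOpen_ball.mem_nhds (hKcball hw))
      have hbd : ∀ w ∈ Kc, ‖fderiv ℂ (Fδ δ) w‖ ≤ L := by
        intro w hw
        have hsubball : ball w (r/4) ⊆ ball z₀ r := by
          intro v hv
          rw [mem_ball] at *
          have hw' : dist w z₀ ≤ 3*r/4 := mem_closedBall.mp hw
          calc dist v z₀ ≤ dist v w + dist w z₀ := dist_triangle _ _ _
            _ < r/4 + 3*r/4 := by linarith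
            _ = r := by ring
        exact cauchyBound (by positivity) ((hd_all δ).mono hsubball)
          (fun v hv => (hFδspec δ hδ).2.1 v (hsubball hv)) 
      have := (convex_closedBall z₀ (3*r/4)).norm_image_sub_le_of_norm_fderiv_le
        hfd hbd hy hx
      rwa [dist_eq_norm]
    -- pointwise ultrafilter limits
    have hlim : ∀ x ∈ Kc, ∃ a : ℂ, Tendsto (fun δ => Fδ δ x) 𝒰 (𝓝 a) := by
      intro x hx
      have hmem : (fun δ => Fδ δ x) ⁻¹' (closedBall (0:ℂ) m) ∈ 𝒰 := by
        apply mem_of_superset hS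
        intro δ hδ
        exact mem_closedBall_zero_iff.mpr ((hFδspec δ hδ).2.1 x (hKcball hx))
      obtain ⟨a, _, ha⟩ := (isCompact_closedBall (0:ℂ) m).ultrafilter_le_nhds
        (𝒰.map (fun δ => Fδ δ x)) (le_principal_iff.mpr hmem)
      exact ⟨a, ha⟩
    choose! Fl hFl using hlim
    -- uniform convergence, then holomorphy of the limit
    have hKccomp : IsCompact Kc := isCompact_closedBall _ _
    have hunif : TendstoUniformlyOn Fδ Fl 𝒰 Kc :=
      unifOfEquicont hS hKccomp hL0 hlip hFl
    have hd34 : ∀ δ, DifferentiableOn ℂ (Fδ δ) (ball z₀ (3*r/4)) := fun δ =>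
      (hd_all δ).mono (ball_subset_ball (by linarith))
    have hFld : DifferentiableOn ℂ Fl (ball z₀ (3*r/4/2)) :=
      holoLimit (by positivity) hd34 (hunif.mono ball_subset_closedBall)
    refine ⟨Fl, hFld.mono (ball_subset_ball (by linarith)), ?_⟩
    -- boundary values
    intro x hx
    have hxKc : x ∈ Kc := ball_subset_closedBall (ball_subset_ball (by linarith) hx.1)
    have h1 : Tendsto (fun δ => Fδ δ x) 𝒰 (𝓝 (Fl x)) := hFl x hxKc
    have h2 : Tendsto (fun δ => g δ x) 𝒰 (𝓝 (g ε x)) :=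
      ((hg2 x hx.2).tendsto ε).mono_left h𝒰ε
    have hcongr : ∀ᶠ δ in 𝒰, Fδ δ x = g δ x :=
      eventually_of_mem hS fun δ hδ => (hFδspec δ hδ).2.2
        ⟨ball_subset_ball (by linarith) hx.1, hx.2⟩
    exact tendsto_nhds_unique ((tendsto_congr' hcongr).mp h1) h2
  -- extract a basic open box inside the interior
  obtain ⟨I, u, hIu, hpi⟩ := isOpen_pi_iff.mp isOpen_interior ε₀ hε₀
  obtain ⟨N, hN⟩ := Metric.tendsto_atTop.mp hz (r/4) (by positivity)
  set js : ℕ := max N ((I.sup id) + 1) with hjsdef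
  have hjsI : js ∉ I := by
    intro hmem
    have h1 : js ≤ I.sup id := Finset.le_sup (f := id) hmem
    have h2 : (I.sup id) + 1 ≤ js := le_max_right _ _
    omega
  have hzjs : z js ∈ ball z₀ (r/4) := by
    rw [mem_ball]
    exact hN js (le_max_left _ _)
  -- two coefficient choices at slot `js`
  set t₀ : (closedBall (0:ℂ) (c js) : Set ℂ) := ε₀ js with ht₀def
  have hcmem : ((c js : ℝ) : ℂ) ∈ closedBall (0:ℂ) (c js) := by
    rw [mem_closedBall_zero_iff]
    simp [abs_of_pos (hc0 js), Complex.norm_real]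
  have h0mem : (0 : ℂ) ∈ closedBall (0:ℂ) (c js) := mem_closedBall_self (hc0 js).le
  obtain ⟨t₁, ht₁ne⟩ : ∃ t₁ : (closedBall (0:ℂ) (c js) : Set ℂ), (t₁ : ℂ) ≠ (t₀ : ℂ) := by
    by_cases h : (t₀ : ℂ) = 0
    · refine ⟨⟨((c js : ℝ) : ℂ), hcmem⟩, ?_⟩
      rw [h]
      simpa using Complex.ofReal_ne_zero.mpr (ne_of_gt (hc0 js))
    · exact ⟨⟨0, h0mem⟩, fun hc => h (by simpa using hc.symm)⟩
  set ε₁ : X := Function.update ε₀ js t₁ with hε₁def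
  -- both points are in `Q`
  have hpiQ : ∀ δ ∈ (I : Set ℕ).pi (fun i => u i), δ ∈ Q := fun δ hδ =>
    hPQ (interior_subset (hpi hδ))
  have hε₀pi : ε₀ ∈ (I : Set ℕ).pi (fun i => u i) := fun i hi => (hIu i hi).2
  have hε₁pi : ε₁ ∈ (I : Set ℕ).pi (fun i => u i) := by
    intro i hi
    rw [hε₁def]
    rw [Function.update_of_ne (fun h : i = js => hjsI (h ▸ hi)) _ _]
    exact (hIu i hi).2
  obtain ⟨F₀, hF₀d, hF₀eq⟩ := hpiQ ε₀ hε₀pi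
  obtain ⟨F₁, hF₁d, hF₁eq⟩ := hpiQ ε₁ hε₁pi
  -- the quotient extends `f js` across `z js`: contradiction
  apply hne js
  refine ⟨ball z₀ (r/4), fun x => ((t₁:ℂ) - (t₀:ℂ))⁻¹ * (F₁ x - F₀ x), isOpen_ball, hzjs,
    (hF₁d.sub hF₀d).const_mul _, ?_⟩
  intro x hx
  show ((t₁:ℂ) - (t₀:ℂ))⁻¹ * (F₁ x - F₀ x) = f js x
  have hdiff : g ε₁ x - g ε₀ x = ((t₁ : ℂ) - (t₀ : ℂ)) * f js x := by
    have := hg3 ε₀ ε₁ js (fun j hj => by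
      rw [hε₁def, Function.update_of_ne hj _ _]) x hx.2
    rw [this, hε₁def, Function.update_self, ht₀def]
  have hF₁x : F₁ x = g ε₁ x := hF₁eq hx
  have hF₀x : F₀ x = g ε₀ x := hF₀eq hx
  rw [hF₁x, hF₀x, hdiff]
  rw [inv_mul_cancel_left₀ (sub_ne_zero.mpr ht₁ne)]

end Main

/-- The global obstruction set is closed in `ℂⁿ` (proof of Theorem 7.1). -/
theorem globalObstructionSet_isClosed (n : ℕ) (hn : 2 ≤ n)
    (Ω M : Set (EuclideanSpace ℂ (Fin n)))
    (hΩM : HasSmoothConnectedBoundary n Ω M) :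
    IsClosed (GlobalObstructionSet n Ω) := by
  apply isClosed_of_closure_subset
  intro z hzcl
  have hsub : GlobalObstructionSet n Ω ⊆ frontier Ω := fun w hw => hw.1
  have hfr : z ∈ frontier Ω :=
    (isClosed_frontier.closure_subset_iff.mpr hsub) hzcl
  obtain ⟨zs, hzsmem, hzslim⟩ := mem_closure_iff_seq_limit.mp hzcl
  have hmem : ∀ j, (zs j ∈ frontier Ω) ∧
      ∃ fm fp : EuclideanSpace ℂ (Fin n) → ℂ,
        DifferentiableOn ℂ fm Ω ∧ DifferentiableOn ℂ fp (closure Ω)ᶜ ∧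
        (¬ ∃ (W : Set (EuclideanSpace ℂ (Fin n))) (F : EuclideanSpace ℂ (Fin n) → ℂ),
          IsOpen W ∧ zs j ∈ W ∧ DifferentiableOn ℂ F W ∧ EqOn F fm (W ∩ Ω)) ∧
        (¬ ∃ (W : Set (EuclideanSpace ℂ (Fin n))) (F : EuclideanSpace ℂ (Fin n) → ℂ),
          IsOpen W ∧ zs j ∈ W ∧ DifferentiableOn ℂ F W ∧
            EqOn F fp (W ∩ (closure Ω)ᶜ)) := fun j => hzsmem j
  choose hfront fm fp hfmd hfpd hfmne hfpne using hmem
  obtain ⟨hΩopen, -, -, -, -⟩ := hΩM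
  obtain ⟨gm, hgmd, hgmne⟩ := exists_nonextendable hΩopen hzslim hfmd hfmne
  obtain ⟨gp, hgpd, hgpne⟩ :=
    exists_nonextendable isClosed_closure.isOpen_compl hzslim hfpd hfpne
  exact ⟨hfr, gm, gp, hgmd, hgpd, hgmne, hgpne⟩
end

section
/- With Ω ⊂ ℂ² the example domain defined from ρ and G as in the context, there exists ε > 0 such that for every point (z₁,z₂) ∈ ℂ² \ closure(Ω) with 0 < |z₁|·exp(1+|z₂|²) < ε one has Re(z₁) < 0, and consequently |exp(1/z₁)| < 1. In particular, the holomorphic function g(z) = exp(1/z₁) on Ω⁺ = ℂ² \ closure(Ω) satisfies |g| < 1 on a neighborhood of every point of the z₂-axis A = {z₁ = 0} intersected with Ω⁺. -/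
open Set Metric

/-- Example of Section 7: near the `z₂`-axis, points of `Ω⁺ = ℂ² \ closure Ω`
have `Re z₁ < 0`, hence `|exp(1/z₁)| < 1`; in particular `|exp(1/z₁)| < 1` holds
on a neighborhood of every point of the `z₂`-axis intersected with `Ω⁺`. -/
theorem example_g_bounded_near_axis
    (ρ : ℂ → ℝ) (hρsmooth : ContDiff ℝ (⊤ : ℕ∞) ρ) (hρ0 : ρ 0 = 0)
    (G : Set ℂ) (hG : G = {ζ : ℂ | ρ ζ < 0})
    (hGbdd : Bornology.IsBounded G) (hGconn : IsConnected G)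
    (hgrad : ∀ ζ : ℂ, ρ ζ = 0 → fderiv ℝ ρ ζ ≠ 0)
    (c : ℝ) (hc : 0 < c) (hderiv0 : ∀ ζ : ℂ, fderiv ℝ ρ 0 ζ = -c * ζ.re)
    (δ : ℝ) (hδ : 0 < δ)
    (hconcave : ∀ ζ ∈ frontier G, ζ ≠ 0 → ‖ζ‖ < δ → ζ.re < 0)
    (Ω : Set (ℂ × ℂ))
    (hΩ : Ω = {z : ℂ × ℂ | ρ (z.1 * Real.exp (1 + ‖z.2‖ ^ 2)) < 0})
    :
    (∃ ε > 0, ∀ z : ℂ × ℂ, z ∈ (closure Ω)ᶜ →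
      0 < ‖z.1‖ * Real.exp (1 + ‖z.2‖ ^ 2) →
      ‖z.1‖ * Real.exp (1 + ‖z.2‖ ^ 2) < ε →
      z.1.re < 0 ∧ ‖Complex.exp (1 / z.1)‖ < 1) ∧
    (∀ p : ℂ × ℂ, p.1 = 0 → ∃ W : Set (ℂ × ℂ), IsOpen W ∧ p ∈ W ∧
      ∀ z ∈ W ∩ (closure Ω)ᶜ, ‖Complex.exp (1 / z.1)‖ < 1) := by
  have hρcont : Continuous ρ := hρsmooth.continuous
  have hGopen : IsOpen G := by
    rw [hG]; exact isOpen_lt hρcont continuous_const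
  -- first-order estimate at 0
  have hdiff : HasFDerivAt ρ (fderiv ℝ ρ 0) 0 :=
    (hρsmooth.differentiable (by simp) 0).hasFDerivAt
  have hlo := hdiff.isLittleO
  have hlo2 := (Asymptotics.isLittleO_iff.mp hlo) (show (0:ℝ) < c / 4 by linarith)
  obtain ⟨ε₁, hε₁pos, hball⟩ := Metric.eventually_nhds_iff.mp hlo2
  have hball' : ∀ ζ : ℂ, ‖ζ‖ < ε₁ → |ρ ζ + c * ζ.re| ≤ c / 4 * ‖ζ‖ := by
    intro ζ hζ
    have := hball (y := ζ) (by simpa [dist_eq_norm] using hζ)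
    simpa [hρ0, hderiv0, Real.norm_eq_abs, sub_eq_add_neg, neg_mul,
      neg_neg] using this
  -- cone: points with Re ζ ≥ |ζ|/2 near 0 lie in G
  have cone : ∀ ζ : ℂ, ‖ζ‖ < ε₁ → ‖ζ‖ ≤ 2 * ζ.re → ζ ≠ 0 → ρ ζ < 0 := by
    intro ζ h1 h2 h0
    have hb := abs_le.mp (hball' ζ h1)
    have habs : 0 < ‖ζ‖ := by
      simpa [norm_pos_iff] using h0
    nlinarith [hb.2]
  set ε : ℝ := min (ε₁ / 2) (δ / 2) with hε_def
  have hεpos : 0 < ε := lt_min (by linarith) (by linarith)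
  -- key: points outside G near 0 have negative real part
  have key : ∀ w : ℂ, w ≠ 0 → ‖w‖ < ε → 0 ≤ ρ w → w.re < 0 := by
    intro w hw0 hwε hρw
    by_contra hre
    push_neg at hre
    set r : ℝ := ‖w‖ with hr_def
    have hr : 0 < r := norm_pos_iff.mpr hw0
    have hrε₁ : r < ε₁ / 2 := lt_of_lt_of_le hwε (min_le_left _ _)
    have hrδ : r < δ / 2 := lt_of_lt_of_le hwε (min_le_right _ _)
    set g : ℝ → ℂ := fun t => w + (t * r : ℝ) with hg_def
    have hgcont : Continuous g := by
      apply continuous_const.add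
      exact Complex.continuous_ofReal.comp (continuous_id.mul continuous_const)
    have hgre : ∀ t : ℝ, (g t).re = w.re + t * r := by
      intro t; simp [hg_def]
    have hgabs : ∀ t : ℝ, t ∈ Icc (0:ℝ) 1 → ‖g t‖ ≤ 2 * r := by
      intro t ht
      calc ‖g t‖ ≤ ‖w‖ + ‖((t*r : ℝ) : ℂ)‖ :=
            norm_add_le _ _
        _ ≤ r + r := by
            refine add_le_add le_rfl ?_
            rw [Complex.norm_real, Real.norm_eq_abs, abs_of_nonneg (by nlinarith [ht.1])]
            nlinarith [ht.1, ht.2]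
        _ = 2 * r := by ring
    have hg1 : g 1 ∈ G := by
      rw [hG]
      refine cone (g 1) ?_ ?_ ?_
      · calc ‖g 1‖ ≤ 2 * r := hgabs 1 (by norm_num)
          _ < ε₁ := by linarith
      · have := hgabs 1 (by norm_num)
        have : (g 1).re = w.re + r := by simpa using hgre 1
        rw [this]
        calc ‖g 1‖ ≤ 2 * r := hgabs 1 (by norm_num)
          _ ≤ 2 * (w.re + r) := by nlinarith
      · intro h
        have : (g 1).re = 0 := by rw [h]; simp
        rw [hgre 1] at this
        nlinarith
    have hg0 : g 0 ∉ G := by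
      rw [hG]
      simp only [mem_setOf_eq, not_lt]
      simpa [hg_def] using hρw
    -- frontier crossing via sInf
    set S : Set ℝ := {t | t ∈ Icc (0:ℝ) 1 ∧ g t ∈ G} with hS_def
    have hSne : S.Nonempty := ⟨1, ⟨by norm_num, hg1⟩⟩
    have hSbdd : BddBelow S := ⟨0, fun t ht => ht.1.1⟩
    set t₀ : ℝ := sInf S with ht₀_def
    have ht₀0 : 0 ≤ t₀ := le_csInf hSne fun t ht => ht.1.1
    have ht₀1 : t₀ ≤ 1 := csInf_le hSbdd ⟨by norm_num, hg1⟩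
    have hpcl : g t₀ ∈ closure G := by
      have h1 : t₀ ∈ closure S := csInf_mem_closure hSne hSbdd
      have h2 : g t₀ ∈ closure (g '' S) := mem_closure_image (hgcont.continuousAt) h1
      exact closure_mono (image_subset_iff.mpr fun t ht => ht.2) h2
    have hpnot : g t₀ ∉ G := by
      intro hp
      have hopen : IsOpen (g ⁻¹' G) := hGopen.preimage hgcont
      obtain ⟨η, hη, hb⟩ := Metric.isOpen_iff.mp hopen t₀ hp
      have ht₀pos : 0 < t₀ := by
        rcases lt_or_eq_of_le ht₀0 with h | h
        · exact h
        · exact absurd (h ▸ hp) hg0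
      set t : ℝ := max (t₀ - η / 2) (t₀ / 2) with ht_def
      have htlt : t < t₀ := max_lt (by linarith) (by linarith)
      have htS : t ∈ S := by
        refine ⟨⟨le_trans (by positivity) (le_max_right _ _), le_trans htlt.le ht₀1⟩, ?_⟩
        apply hb
        rw [mem_ball, Real.dist_eq, abs_of_nonpos (by linarith)]
        have : t₀ - η / 2 ≤ t := le_max_left _ _
        linarith
      exact absurd (csInf_le hSbdd htS) (not_le.mpr htlt)
    have hpfr : g t₀ ∈ frontier G := by
      rw [frontier, hGopen.interior_eq]
      exact ⟨hpcl, hpnot⟩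
    have hpne : g t₀ ≠ 0 := by
      intro h
      have h1 : (g t₀).re = 0 := by rw [h]; simp
      rw [hgre t₀] at h1
      have ht₀r : t₀ * r = 0 := by nlinarith
      have : t₀ = 0 := by
        rcases mul_eq_zero.mp ht₀r with h' | h'
        · exact h'
        · exact absurd h' (ne_of_gt hr)
      rw [this] at h
      apply hw0
      simpa [hg_def] using h
    have hpδ : ‖g t₀‖ < δ := by
      calc ‖g t₀‖ ≤ 2 * r := hgabs t₀ ⟨ht₀0, ht₀1⟩
        _ < δ := by linarith
    have := hconcave (g t₀) hpfr hpne hpδ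
    rw [hgre t₀] at this
    nlinarith
  -- main quantitative statement
  have main : ∀ z : ℂ × ℂ, z ∈ (closure Ω)ᶜ →
      0 < ‖z.1‖ * Real.exp (1 + ‖z.2‖ ^ 2) →
      ‖z.1‖ * Real.exp (1 + ‖z.2‖ ^ 2) < ε →
      z.1.re < 0 ∧ ‖Complex.exp (1 / z.1)‖ < 1 := by
    intro z hz hpos hlt
    set E : ℝ := Real.exp (1 + ‖z.2‖ ^ 2) with hE_def
    have hE : 0 < E := Real.exp_pos _
    set w : ℂ := z.1 * (E : ℂ) with hw_def
    have hwabs : ‖w‖ = ‖z.1‖ * E := by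
      rw [hw_def, norm_mul, Complex.norm_real, Real.norm_eq_abs, abs_of_pos hE]
    have hz1ne0 : z.1 ≠ 0 := by
      intro h; rw [h] at hpos; simp at hpos
    have hw0 : w ≠ 0 := mul_ne_zero hz1ne0 (by exact_mod_cast hE.ne')
    have hρw : 0 ≤ ρ w := by
      have hzΩ : z ∉ Ω := fun h => hz (subset_closure h)
      rw [hΩ] at hzΩ
      simpa [hw_def, hE_def, not_lt] using hzΩ
    have hre := key w hw0 (by rw [hwabs]; exact hlt) hρw
    have hwre : w.re = z.1.re * E := by
      rw [hw_def]
      simp [Complex.mul_re]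
    rw [hwre] at hre
    have hz1re : z.1.re < 0 := by nlinarith
    refine ⟨hz1re, ?_⟩
    have hz1 : z.1 ≠ 0 := by
      intro h; rw [h] at hz1re; simp at hz1re
    rw [Complex.norm_exp]
    apply Real.exp_lt_one_iff.mpr
    rw [one_div, Complex.inv_re]
    apply div_neg_of_neg_of_pos hz1re
    exact Complex.normSq_pos.mpr hz1
  refine ⟨⟨ε, hεpos, main⟩, ?_⟩
  intro p hp
  set W : Set (ℂ × ℂ) := {z | ‖z.1‖ * Real.exp (1 + ‖z.2‖ ^ 2) < ε}
    with hW_def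
  have hWopen : IsOpen W := by
    apply isOpen_lt _ continuous_const
    exact (continuous_norm.comp continuous_fst).mul
      (Real.continuous_exp.comp (continuous_const.add ((continuous_norm.comp continuous_snd).pow 2)))
  have hpW : p ∈ W := by
    rw [hW_def]
    simp [hp, hεpos]
  refine ⟨W, hWopen, hpW, ?_⟩
  rintro z ⟨hzW, hzcl⟩
  -- points with z.1 = 0 lie in closure Ω
  have hz1ne : z.1 ≠ 0 := by
    intro h0
    apply hzcl
    set E : ℝ := Real.exp (1 + ‖z.2‖ ^ 2) with hE_def
    have hE : 0 < E := Real.exp_pos _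
    rw [Metric.mem_closure_iff]
    intro r hr
    set t : ℝ := min (r / 2) (ε / (2 * E)) with ht_def
    have htpos : 0 < t := lt_min (by linarith) (by positivity)
    refine ⟨((t : ℂ), z.2), ?_, ?_⟩
    · rw [hΩ]
      simp only [mem_setOf_eq]
      have habs : ‖(t : ℂ)‖ = t := by
        rw [Complex.norm_real, Real.norm_eq_abs, abs_of_pos htpos]
      refine cone _ ?_ ?_ ?_
      · rw [norm_mul, habs, Complex.norm_real, Real.norm_eq_abs, abs_of_pos hE]
        have h1 : t ≤ ε / (2 * E) := min_le_right _ _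
        have h2 : t * E ≤ ε / 2 := by
          calc t * E ≤ ε / (2 * E) * E := by nlinarith
            _ = ε / 2 := by field_simp
        have : ε ≤ ε₁ / 2 := min_le_left _ _
        linarith
      · have : ((t : ℂ) * (E : ℂ)).re = t * E := by
          push_cast
          simp [Complex.mul_re]
        rw [this, norm_mul, habs, Complex.norm_real, Real.norm_eq_abs, abs_of_pos hE]
        nlinarith
      · intro h
        rcases mul_eq_zero.mp h with h' | h'
        · exact absurd (by exact_mod_cast h') (ne_of_gt htpos)
        · exact absurd (by exact_mod_cast h') (ne_of_gt hE)
    · rw [Prod.dist_eq]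
      simp only [dist_self]
      apply max_lt _ hr
      have h1 : t ≤ r / 2 := min_le_left _ _
      have : dist z.1 ((t : ℝ) : ℂ) = t := by
        rw [h0, Complex.dist_eq, zero_sub, norm_neg, Complex.norm_real, Real.norm_eq_abs,
          abs_of_pos htpos]
      rw [this]; linarith
  have hpos : 0 < ‖z.1‖ * Real.exp (1 + ‖z.2‖ ^ 2) :=
    mul_pos (norm_pos_iff.mpr hz1ne) (Real.exp_pos _)
  exact (main z hzcl hpos hzW).2
end

section
/- With Ω ⊂ ℂ² the example domain defined from ρ and G as in the context, the holomorphic function g_Ω(z) = exp(1/z₁) on Ω does not have polynomial growth at the boundary point 0 = (0,0) ∈ M = frontier(Ω): for every C > 0, every k ∈ ℕ, and every ε > 0, there exists z = (z₁,z₂) ∈ Ω with ‖z‖ < ε and |exp(1/z₁)| > C · dist(z, M)^{−k}. -/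
open Set Metric

/-- Example of Section 7: the extension `g_Ω(z) = exp(1/z₁)` of the bounded CR
function `g*` does not have polynomial growth at the boundary point
`0 = (0,0) ∈ M = frontier Ω`. -/
theorem example_extension_not_polynomial_growth
    (ρ : ℂ → ℝ) (hρsmooth : ContDiff ℝ (⊤ : ℕ∞) ρ) (hρ0 : ρ 0 = 0)
    (G : Set ℂ) (hG : G = {ζ : ℂ | ρ ζ < 0})
    (hGbdd : Bornology.IsBounded G) (hGconn : IsConnected G)
    (hgrad : ∀ ζ : ℂ, ρ ζ = 0 → fderiv ℝ ρ ζ ≠ 0)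
    (c : ℝ) (hc : 0 < c) (hderiv0 : ∀ ζ : ℂ, fderiv ℝ ρ 0 ζ = -c * ζ.re)
    (δ : ℝ) (hδ : 0 < δ)
    (hconcave : ∀ ζ ∈ frontier G, ζ ≠ 0 → ‖ζ‖ < δ → ζ.re < 0)
    (Ω : Set (ℂ × ℂ))
    (hΩ : Ω = {z : ℂ × ℂ | ρ (z.1 * Real.exp (1 + ‖z.2‖ ^ 2)) < 0})
    :
    ∀ C : ℝ, 0 < C → ∀ k : ℕ, ∀ ε : ℝ, 0 < ε →
      ∃ z : ℂ × ℂ, z ∈ Ω ∧ ‖z‖ < ε ∧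
        C * Metric.infDist z (frontier Ω) ^ (-(k : ℤ)) <
          ‖Complex.exp (1 / z.1)‖ := by
  intro C hC k ε hε
  -- differentiability of ρ at 0 and little-o estimate
  have hdiff : HasFDerivAt ρ (fderiv ℝ ρ 0) 0 :=
    ((hρsmooth.differentiable (by simp)) 0).hasFDerivAt
  have hlo := hasFDerivAt_iff_isLittleO_nhds_zero.1 hdiff
  have hc2 : (0:ℝ) < c / 2 := by linarith
  have hev := (Asymptotics.isLittleO_iff.1 hlo) hc2
  rw [Metric.eventually_nhds_iff] at hev
  obtain ⟨η, hη, hηbound⟩ := hev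
  -- key cone lemma
  have hcone : ∀ w : ℂ, w ≠ 0 → ‖w‖ < η → (3/4) * ‖w‖ ≤ w.re → ρ w < 0 := by
    intro w hw0 hwη hwre
    have hb := hηbound (y := w) (by simpa [dist_eq_norm] using hwη)
    simp only [zero_add, hρ0, sub_zero] at hb
    rw [hderiv0 w] at hb
    have habs : |ρ w - (-c * w.re)| ≤ c / 2 * ‖w‖ := by
      simpa [Real.norm_eq_abs] using hb
    have h1 : ρ w ≤ -c * w.re + c / 2 * ‖w‖ := by
      have := abs_le.1 habs
      linarith [this.2]
    have hwpos : 0 < ‖w‖ := norm_pos_iff.2 hw0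
    nlinarith [hwre]
  -- ball containment lemma
  have hball : ∀ s : ℝ, 0 < s → s ≤ 1 → 2 * s * Real.exp 2 < η →
      Metric.ball (((s:ℂ), (0:ℂ)) : ℂ × ℂ) (s/10) ⊆ Ω := by
    intro s hs hs1 hsη z hz
    rw [Metric.mem_ball, Prod.dist_eq, max_lt_iff] at hz
    obtain ⟨hz1, hz2⟩ := hz
    rw [dist_eq_norm] at hz1 hz2
    set E : ℝ := Real.exp (1 + ‖z.2‖ ^ 2) with hE
    have hEpos : 0 < E := Real.exp_pos _
    have hz2' : ‖z.2‖ < s / 10 := by simpa using hz2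
    have habs2 : ‖z.2‖ ^ 2 ≤ 1 := by
      have h1 : ‖z.2‖ < s / 10 := hz2'
      have h2 : ‖z.2‖ ≤ 1 := by
        have := norm_nonneg z.2; linarith
      nlinarith [norm_nonneg z.2]
    have hEle : E ≤ Real.exp 2 := Real.exp_le_exp.2 (by linarith)
    -- bounds on z.1
    have hre : s - s/10 ≤ z.1.re := by
      have h1 : |(z.1 - (s:ℂ)).re| ≤ ‖z.1 - (s:ℂ)‖ := Complex.abs_re_le_norm _
      have h2 : (z.1 - (s:ℂ)).re = z.1.re - s := by simp
      rw [h2] at h1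
      have := abs_le.1 h1
      linarith [this.1]
    have hnorm : ‖z.1‖ ≤ s + s/10 := by
      calc ‖z.1‖ = ‖(s:ℂ) + (z.1 - (s:ℂ))‖ := by ring_nf
        _ ≤ ‖(s:ℂ)‖ + ‖z.1 - (s:ℂ)‖ := norm_add_le _ _
        _ ≤ s + s/10 := by
            have : ‖(s:ℂ)‖ = s := by
              simp [Complex.norm_real, abs_of_pos hs]
            linarith [le_of_lt hz1, this.le, this.ge]
    have hz10 : z.1 ≠ 0 := by
      intro h
      rw [h] at hz1
      simp only [zero_sub, norm_neg] at hz1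
      have : ‖(s:ℂ)‖ = s := by simp [Complex.norm_real, abs_of_pos hs]
      rw [this] at hz1
      linarith
    set w : ℂ := z.1 * (E : ℂ) with hw
    have hw0 : w ≠ 0 := mul_ne_zero hz10 (by exact_mod_cast hEpos.ne')
    have hwnorm : ‖w‖ = ‖z.1‖ * E := by
      rw [hw, norm_mul, Complex.norm_real, Real.norm_eq_abs, abs_of_pos hEpos]
    have hwre : w.re = z.1.re * E := by
      rw [hw]
      simp [Complex.mul_re]
    have hwη : ‖w‖ < η := by
      rw [hwnorm]
      calc ‖z.1‖ * E ≤ (s + s/10) * Real.exp 2 :=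
            mul_le_mul hnorm hEle hEpos.le (by positivity)
        _ ≤ 2 * s * Real.exp 2 := by nlinarith [Real.exp_pos 2]
        _ < η := hsη
    have hwratio : (3/4) * ‖w‖ ≤ w.re := by
      rw [hwnorm, hwre]
      have : (3/4) * ‖z.1‖ ≤ z.1.re := by linarith
      nlinarith
    have hfin := hcone w hw0 hwη hwratio
    rw [hw, hE] at hfin
    rw [hΩ]
    exact hfin
  -- 0 is in the frontier of Ω
  have hscale : ∀ s : ℝ, 0 < s → s ≤ 1 → 2 * s * Real.exp 2 < η →
      (((s:ℂ), (0:ℂ)) : ℂ × ℂ) ∈ Ω := fun s hs hs1 hsη =>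
    hball s hs hs1 hsη (Metric.mem_ball_self (by linarith))
  have hΩopen : IsOpen Ω := by
    rw [hΩ]
    have hcont : Continuous fun z : ℂ × ℂ =>
        ρ (z.1 * Real.exp (1 + ‖z.2‖ ^ 2)) := by
      apply hρsmooth.continuous.comp
      exact continuous_fst.mul (Complex.continuous_ofReal.comp (Real.continuous_exp.comp
        (continuous_const.add ((continuous_snd.norm).pow 2))))
    exact isOpen_lt hcont continuous_const
  have h0notΩ : (0 : ℂ × ℂ) ∉ Ω := by
    rw [hΩ]
    simp [hρ0]
  have hfr0 : (0 : ℂ × ℂ) ∈ frontier Ω := by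
    rw [frontier, hΩopen.interior_eq]
    refine ⟨?_, h0notΩ⟩
    rw [Metric.mem_closure_iff]
    intro r hr
    set s : ℝ := min (r/2) (min 1 (η / (4 * Real.exp 2))) with hs_def
    have hspos : 0 < s := by
      apply lt_min (by linarith) (lt_min one_pos (by positivity))
    have hs1 : s ≤ 1 := le_trans (min_le_right _ _) (min_le_left _ _)
    have hsη : 2 * s * Real.exp 2 < η := by
      have h1 : s ≤ η / (4 * Real.exp 2) := le_trans (min_le_right _ _) (min_le_right _ _)
      have h2 : 0 < Real.exp 2 := Real.exp_pos 2
      have h6 : s * Real.exp 2 ≤ η / 4 := by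
        calc s * Real.exp 2 ≤ η / (4 * Real.exp 2) * Real.exp 2 :=
              mul_le_mul_of_nonneg_right h1 h2.le
          _ = η / 4 := by field_simp
      linarith
    refine ⟨((s:ℂ), (0:ℂ)), hscale s hspos hs1 hsη, ?_⟩
    have : dist (0 : ℂ × ℂ) (((s:ℂ), (0:ℂ)) : ℂ × ℂ) = s := by
      rw [Prod.dist_eq]
      simp [Complex.dist_eq, abs_of_pos hspos, hspos.le]
    rw [this]
    calc s ≤ r/2 := min_le_left _ _
      _ < r := by linarith
  -- choose X for the exponential growth
  obtain ⟨X, hX⟩ := Filter.eventually_atTop.1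
    ((Real.tendsto_exp_div_pow_atTop k).eventually_ge_atTop (C * 10 ^ k + 1))
  have hX' : ∀ x : ℝ, max X 1 ≤ x → C * 10 ^ k * x ^ k < Real.exp x := by
    intro x hx
    have hx1 : (1:ℝ) ≤ x := le_trans (le_max_right _ _) hx
    have hxk : 0 < x ^ k := pow_pos (by linarith) k
    have h1 := hX x (le_trans (le_max_left _ _) hx)
    have h2 : (C * 10 ^ k + 1) * x ^ k ≤ Real.exp x := (le_div_iff₀ hxk).1 h1
    nlinarith
  -- choose t
  set Y : ℝ := max X 1 with hY
  have hYpos : 0 < Y := lt_of_lt_of_le one_pos (le_max_right _ _)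
  set t : ℝ := min (min ε 1) (min (η / (4 * Real.exp 2)) (1/Y)) / 2 with ht_def
  have htpos : 0 < t := by
    apply div_pos _ two_pos
    exact lt_min (lt_min hε one_pos) (lt_min (by positivity) (by positivity))
  have htε : t < ε := by
    have h1 : min (min ε 1) (min (η / (4 * Real.exp 2)) (1/Y)) ≤ ε :=
      le_trans (min_le_left _ _) (min_le_left _ _)
    have h2 : 0 < min (min ε 1) (min (η / (4 * Real.exp 2)) (1/Y)) := by linarith [htpos, ht_def]
    rw [ht_def]
    linarith
  have ht1 : t ≤ 1 := by
    have h1 : min (min ε 1) (min (η / (4 * Real.exp 2)) (1/Y)) ≤ 1 :=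
      le_trans (min_le_left _ _) (min_le_right _ _)
    rw [ht_def]; linarith
  have htη : 2 * t * Real.exp 2 < η := by
    have h1 : min (min ε 1) (min (η / (4 * Real.exp 2)) (1/Y)) ≤ η / (4 * Real.exp 2) :=
      le_trans (min_le_right _ _) (min_le_left _ _)
    have h2 : 2 * t ≤ η / (4 * Real.exp 2) := by rw [ht_def]; linarith
    have h3 : 0 < Real.exp 2 := Real.exp_pos 2
    have h4 : 2 * t * Real.exp 2 ≤ η / (4 * Real.exp 2) * Real.exp 2 := by nlinarith
    have h5 : η / (4 * Real.exp 2) * Real.exp 2 = η / 4 := by field_simp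
    rw [h5] at h4
    linarith
  have htY : Y ≤ 1 / t := by
    have h1 : min (min ε 1) (min (η / (4 * Real.exp 2)) (1/Y)) ≤ 1/Y :=
      le_trans (min_le_right _ _) (min_le_right _ _)
    have h2 : t ≤ 1/Y / 2 := by rw [ht_def]; linarith
    have h3 : t ≤ 1/Y := le_trans h2 (half_le_self (by positivity))
    rw [le_div_iff₀ htpos]
    rw [le_div_iff₀ hYpos] at h3
    linarith [mul_comm Y t]
  -- the point
  refine ⟨((t:ℂ), (0:ℂ)), hscale t htpos ht1 htη, ?_, ?_⟩
  · have : ‖(((t:ℂ), (0:ℂ)) : ℂ × ℂ)‖ = t := by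
      rw [Prod.norm_def]
      simp [Complex.norm_real, abs_of_pos htpos, htpos.le, max_eq_left htpos.le]
    rw [this]; exact htε
  · -- distance bound
    set d : ℝ := Metric.infDist (((t:ℂ), (0:ℂ)) : ℂ × ℂ) (frontier Ω) with hd
    have hfrne : (frontier Ω).Nonempty := ⟨0, hfr0⟩
    have hdlb : t / 10 ≤ d := by
      by_contra h
      push_neg at h
      obtain ⟨y, hy, hylt⟩ := (Metric.infDist_lt_iff hfrne).1 h
      have hyΩ : y ∈ Ω := hball t htpos ht1 htη (Metric.mem_ball.2 (by
        rw [dist_comm]; exact hylt))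
      exact (hΩopen.interior_eq ▸ hy.2) hyΩ
    have hdpos : 0 < d := lt_of_lt_of_le (by linarith) hdlb
    -- RHS value
    have hrhs : ‖Complex.exp (1 / ((t:ℂ)))‖ = Real.exp (1/t) := by
      have : (1 / ((t:ℂ))) = (((1/t : ℝ)) : ℂ) := by push_cast; ring
      rw [this, Complex.norm_exp, Complex.ofReal_re]
    rw [hrhs]
    -- chain of inequalities
    have hzp : d ^ (-(k:ℤ)) = (d ^ k)⁻¹ := by
      rw [zpow_neg, zpow_natCast]
    rw [hzp]
    have h1 : (d ^ k)⁻¹ ≤ ((t/10) ^ k)⁻¹ := by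
      apply inv_anti₀ (pow_pos (by linarith) k)
      exact pow_le_pow_left₀ (by linarith) hdlb k
    have h2 : C * (d ^ k)⁻¹ ≤ C * ((t/10) ^ k)⁻¹ :=
      mul_le_mul_of_nonneg_left h1 hC.le
    have h3 : ((t/10 : ℝ) ^ k)⁻¹ = 10 ^ k * (1/t) ^ k := by
      rw [← inv_pow, ← mul_pow]
      congr 1
      field_simp
    have h4 : C * ((t/10) ^ k)⁻¹ < Real.exp (1/t) := by
      rw [h3, ← mul_assoc]
      exact hX' (1/t) htY
    linarith
end
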